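/- arXiv:1912.09552 — 6 statements merged into one kernel-verified Lean document; each statement's English description precedes it below -/
import Mathlib

section
/- The function f : ℝ^m → ℝ defined by f(s) = G(exp(s_1), …, exp(s_m)) is strictly convex on ℝ^m. -/
/-!
Restricted to a line `t ↦ x + t • d`, with `Y = exp (x + t • d)` the function
`g t = G (exp (x + t • d))` has `g'' t = D²G(Y) (Y * d) (Y * d) + DG(Y) (Y * d * d)`.
The second term is positive because all first partials are and `d ≠ 0`. For the first,
homogeneity of `G` makes its gradient homogeneous of degree zero, so the Hessian `B` satisfies
`B Y = 0`; together with `B i j ≤ 0` off the diagonal this gives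
`∑ B i j (Y i d i) (Y j d j) = -½ ∑ B i j Y i Y j (d i - d j)² ≥ 0`.
-/

open Finset Set Filter Topology

theorem StrictConvexOn.of_forall_line {E : Type*} [AddCommGroup E] [Module ℝ E] {f : E → ℝ}
    (h : ∀ x y, x ≠ y → StrictConvexOn ℝ univ fun t : ℝ => f (x + t • (y - x))) :
    StrictConvexOn ℝ univ f := by
  refine ⟨convex_univ, fun x _ y _ hxy a b ha hb hab => ?_⟩
  have key := (h x y hxy).2 (mem_univ 0) (mem_univ 1) zero_ne_one ha hb hab
  have hline : x + b • (y - x) = a • x + b • y := by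
    rw [eq_sub_of_add_eq hab]; module
  simpa [hline] using key

theorem ContinuousLinearMap.apply_eq_sum_single {ι M : Type*} [Fintype ι] [DecidableEq ι]
    [AddCommGroup M] [Module ℝ M] [TopologicalSpace M]
    (L : (ι → ℝ) →L[ℝ] M) (v : ι → ℝ) : L v = ∑ i, v i • L (Pi.single i 1) := by
  conv_lhs => rw [pi_eq_sum_univ' v]
  simp only [map_sum, map_smul]

theorem sum_sum_mul_nonneg_of_offDiag_nonpos {ι : Type*} [Fintype ι] (B : ι → ι → ℝ)
    (Y d : ι → ℝ) (hsym : ∀ i j, B i j = B j i) (hrow : ∀ i, ∑ j, B i j * Y j = 0)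
    (hoff : ∀ i j, i ≠ j → B i j ≤ 0) (hY : ∀ i, 0 ≤ Y i) :
    0 ≤ ∑ i, ∑ j, B i j * (Y i * d i) * (Y j * d j) := by
  have hleft : ∑ i, ∑ j, B i j * Y i * Y j * d i ^ 2 = 0 := by
    have h i : ∑ j, B i j * Y i * Y j * d i ^ 2 = Y i * d i ^ 2 * ∑ j, B i j * Y j := by
      rw [mul_sum]; exact sum_congr rfl fun j _ => by ring
    simp [h, hrow]
  have hright : ∑ i, ∑ j, B i j * Y i * Y j * d j ^ 2 = 0 := by
    rw [sum_comm, ← hleft]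
    exact sum_congr rfl fun i _ => sum_congr rfl fun j _ => by rw [hsym]; ring
  have hsq : ∑ i, ∑ j, B i j * Y i * Y j * (d i - d j) ^ 2 ≤ 0 := by
    refine sum_nonpos fun i _ => sum_nonpos fun j _ => ?_
    rcases eq_or_ne i j with rfl | hij
    · simp
    · exact mul_nonpos_of_nonpos_of_nonneg
        (mul_nonpos_of_nonpos_of_nonneg (mul_nonpos_of_nonpos_of_nonneg (hoff i j hij) (hY i))
          (hY j)) (sq_nonneg _)
  have hexpand : ∑ i, ∑ j, B i j * Y i * Y j * (d i - d j) ^ 2 =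
      ∑ i, ∑ j, B i j * Y i * Y j * d i ^ 2 + ∑ i, ∑ j, B i j * Y i * Y j * d j ^ 2
        - 2 * ∑ i, ∑ j, B i j * (Y i * d i) * (Y j * d j) := by
    simp only [mul_sum, ← sum_add_distrib, ← sum_sub_distrib]
    exact sum_congr rfl fun i _ => sum_congr rfl fun j _ => by ring
  linarith

theorem ContinuousLinearMap.apply_self_nonneg_of_offDiag_nonpos {ι : Type*} [Fintype ι]
    [DecidableEq ι] (Q : (ι → ℝ) →L[ℝ] (ι → ℝ) →L[ℝ] ℝ) {Y : ι → ℝ} (hY : ∀ i, 0 < Y i)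
    (hsym : ∀ u v, Q u v = Q v u) (hker : Q Y = 0)
    (hoff : ∀ i j, i ≠ j → Q (Pi.single i 1) (Pi.single j 1) ≤ 0) (z : ι → ℝ) :
    0 ≤ Q z z := by
  have hexpand u v : Q u v = ∑ i, ∑ j, Q (Pi.single i 1) (Pi.single j 1) * u i * v j := by
    rw [Q.apply_eq_sum_single, _root_.sum_apply]
    refine sum_congr rfl fun i _ => ?_
    rw [smul_apply, (Q _).apply_eq_sum_single, smul_eq_mul, mul_sum]
    exact sum_congr rfl fun j _ => by rw [smul_eq_mul]; ring
  have hz : z = Y * (z / Y) := by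
    ext i; simp [mul_div_cancel₀ _ (hY i).ne']
  rw [hz, hexpand]
  refine sum_sum_mul_nonneg_of_offDiag_nonpos _ Y (z / Y) (fun i j => hsym _ _) (fun i => ?_) hoff
    (fun i => (hY i).le)
  calc ∑ j, Q (Pi.single i 1) (Pi.single j 1) * Y j = Q (Pi.single i 1) Y := by
        simp only [(Q _).apply_eq_sum_single Y, smul_eq_mul, mul_comm]
    _ = 0 := by rw [hsym, hker, zero_apply]

section Homogeneous

variable {𝕜 E F : Type*} [NontriviallyNormedField 𝕜] [NormedAddCommGroup E] [NormedSpace 𝕜 E]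
  [NormedAddCommGroup F] [NormedSpace 𝕜 F]

theorem fderiv_smul_eq_of_homogeneous {G : E → F} {S : Set E} (hS : IsOpen S) {c : 𝕜}
    (hc : c ≠ 0) (hhom : ∀ Y ∈ S, G (c • Y) = c • G Y) {Y : E} (hY : Y ∈ S) :
    fderiv 𝕜 G (c • Y) = fderiv 𝕜 G Y := by
  have hloc : (fun W => G (c • W)) =ᶠ[𝓝 Y] c • G := eventuallyEq_of_mem (hS.mem_nhds hY) hhom
  have h := hloc.fderiv_eq (𝕜 := 𝕜)
  rw [fderiv_comp_smul, fderiv_const_smul_field (R := 𝕜), Pi.smul_apply] at h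
  exact smul_right_injective (E →L[𝕜] F) hc h

theorem fderiv_apply_self_eq_zero_of_eventually_smul_eq {H : E → F} {Y : E}
    (hH : DifferentiableAt 𝕜 H Y) (hconst : (fun c : 𝕜 => H (c • Y)) =ᶠ[𝓝 1] fun _ => H Y) :
    fderiv 𝕜 H Y Y = 0 := by
  have hray : HasDerivAt (fun c : 𝕜 => c • Y) Y 1 := by
    simpa using (hasDerivAt_id (1 : 𝕜)).smul_const Y
  have hderiv : HasDerivAt (fun c : 𝕜 => H (c • Y)) (fderiv 𝕜 H Y Y) 1 :=
    hH.hasFDerivAt.comp_hasDerivAt_of_eq 1 hray (one_smul 𝕜 Y).symm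
  rw [← hderiv.deriv, hconst.deriv_eq, deriv_const]

end Homogeneous

section PositiveOrthant

variable {ι : Type*} [Fintype ι]

theorem isOpen_setOf_forall_pos : IsOpen {Y : ι → ℝ | ∀ i, 0 < Y i} := by
  simpa only [ofPred_forall] using isOpen_iInter_of_finite fun i =>
    isOpen_lt continuous_const (continuous_apply i)

variable [DecidableEq ι]

theorem fderiv_fderiv_apply_self_nonneg_of_homogeneous {G : (ι → ℝ) → ℝ}
    (hG : ContDiffOn ℝ 2 G {Y | ∀ i, 0 < Y i})
    (hhom : ∀ c : ℝ, 0 < c → ∀ Y : ι → ℝ, (∀ i, 0 < Y i) → G (c • Y) = c * G Y)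
    (hmixed : ∀ Y : ι → ℝ, (∀ i, 0 < Y i) → ∀ i j, i ≠ j →
      fderiv ℝ (fun W => fderiv ℝ G W (Pi.single i 1)) Y (Pi.single j 1) ≤ 0)
    {Y : ι → ℝ} (hY : ∀ i, 0 < Y i) (z : ι → ℝ) :
    0 ≤ fderiv ℝ (fderiv ℝ G) Y z z := by
  have hG2 : ContDiffAt ℝ 2 G Y := hG.contDiffAt (isOpen_setOf_forall_pos.mem_nhds hY)
  have hdiff : DifferentiableAt ℝ (fderiv ℝ G) Y :=
    (hG2.fderiv_right (m := 1) le_rfl).differentiableAt one_ne_zero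
  have hker : fderiv ℝ (fderiv ℝ G) Y Y = 0 := by
    refine fderiv_apply_self_eq_zero_of_eventually_smul_eq hdiff ?_
    filter_upwards [Ioi_mem_nhds one_pos] with c hc
    exact fderiv_smul_eq_of_homogeneous isOpen_setOf_forall_pos hc.ne'
      (fun W hW => hhom c hc W hW) hY
  refine (fderiv ℝ (fderiv ℝ G) Y).apply_self_nonneg_of_offDiag_nonpos hY
    (hG2.isSymmSndFDerivAt (by simp)) hker (fun i j hij => ?_) z
  simpa [fderiv_clm_apply hdiff (differentiableAt_const _)] using hmixed Y hY j i hij.symm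

theorem ContinuousLinearMap.apply_pos_of_apply_single_pos (L : (ι → ℝ) →L[ℝ] ℝ)
    (hL : ∀ i, 0 < L (Pi.single i 1)) {v : ι → ℝ} (hv : 0 < v) : 0 < L v := by
  obtain ⟨hle, i, hi⟩ := Pi.lt_def.1 hv
  rw [L.apply_eq_sum_single]
  exact sum_pos' (fun j _ => mul_nonneg (hle j) (hL j).le) ⟨i, mem_univ i, mul_pos hi (hL i)⟩

omit [Fintype ι] [DecidableEq ι] in
theorem hasDerivAt_exp_affine (x d : ι → ℝ) (t : ℝ) :
    HasDerivAt (fun t : ℝ => fun i => Real.exp ((x + t • d) i))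
      ((fun i => Real.exp ((x + t • d) i)) * d) t := by
  refine hasDerivAt_pi.2 fun i => ?_
  simpa using (((hasDerivAt_id t).mul_const (d i)).const_add (x i)).exp

theorem strictConvexOn_comp_exp_affine {G : (ι → ℝ) → ℝ}
    (hG : ContDiffOn ℝ 2 G {Y | ∀ i, 0 < Y i})
    (hgrad : ∀ Y : ι → ℝ, (∀ i, 0 < Y i) → ∀ i, 0 < fderiv ℝ G Y (Pi.single i 1))
    (hhess : ∀ Y : ι → ℝ, (∀ i, 0 < Y i) → ∀ z, 0 ≤ fderiv ℝ (fderiv ℝ G) Y z z)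
    (x : ι → ℝ) {d : ι → ℝ} (hd : d ≠ 0) :
    StrictConvexOn ℝ univ fun t : ℝ => G fun i => Real.exp ((x + t • d) i) := by
  set φ : ℝ → ι → ℝ := fun t i => Real.exp ((x + t • d) i)
  have hφ t i : 0 < φ t i := Real.exp_pos _
  have hG2 t : ContDiffAt ℝ 2 G (φ t) :=
    hG.contDiffAt (isOpen_setOf_forall_pos.mem_nhds (hφ t))
  have hφ' t : HasDerivAt φ (φ t * d) t := hasDerivAt_exp_affine x d t
  have hd1 t : HasDerivAt (fun t => G (φ t)) (fderiv ℝ G (φ t) (φ t * d)) t :=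
    ((hG2 t).differentiableAt two_ne_zero).hasFDerivAt.comp_hasDerivAt t (hφ' t)
  have hd2 t : HasDerivAt (fun t => fderiv ℝ G (φ t) (φ t * d))
      (fderiv ℝ (fderiv ℝ G) (φ t) (φ t * d) (φ t * d) + fderiv ℝ G (φ t) (φ t * d * d)) t :=
    ((((hG2 t).fderiv_right (m := 1) le_rfl).differentiableAt one_ne_zero).hasFDerivAt
      |>.comp_hasDerivAt t (hφ' t)).clm_apply ((hφ' t).mul_const d)
  obtain ⟨k, hk⟩ := Function.ne_iff.1 hd
  have hφdd t : 0 < φ t * d * d := Pi.lt_def.2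
    ⟨fun i => by simpa [mul_assoc] using mul_nonneg (hφ t i).le (mul_self_nonneg (d i)),
      k, by simpa [mul_assoc] using mul_pos (hφ t k) (mul_self_pos.2 hk)⟩
  refine strictConvexOn_univ_of_deriv2_pos
    (continuous_iff_continuousAt.2 fun t => (hd1 t).continuousAt) fun t => ?_
  change 0 < deriv (deriv fun t => G (φ t)) t
  rw [funext fun t => (hd1 t).deriv, (hd2 t).deriv]
  exact add_pos_of_nonneg_of_pos (hhess _ (hφ t) _)
    ((fderiv ℝ G (φ t)).apply_pos_of_apply_single_pos (hgrad _ (hφ t)) (hφdd t))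

end PositiveOrthant

theorem stmt_0_general
    (m : ℕ)
    (G : (Fin m → ℝ) → ℝ)
    (hGsmooth : ContDiffOn ℝ 2 G {Y : Fin m → ℝ | ∀ i, 0 < Y i})
    (hGhom : ∀ lam : ℝ, 0 < lam → ∀ Y : Fin m → ℝ, (∀ i, 0 < Y i) →
      G (lam • Y) = lam * G Y)
    (hGd1 : ∀ Y : Fin m → ℝ, (∀ i, 0 < Y i) → ∀ i : Fin m,
      0 < fderiv ℝ G Y (Pi.single i 1))
    (hGd2 : ∀ Y : Fin m → ℝ, (∀ i, 0 < Y i) → ∀ i j : Fin m, i ≠ j →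
      fderiv ℝ (fun W => fderiv ℝ G W (Pi.single i 1)) Y (Pi.single j 1) ≤ 0) :
    StrictConvexOn ℝ (Set.univ : Set (Fin m → ℝ))
      (fun s : Fin m → ℝ => G fun i => Real.exp (s i)) := by
  have hhess (Y : Fin m → ℝ) (hY : ∀ i, 0 < Y i) (z : Fin m → ℝ) :
      0 ≤ fderiv ℝ (fderiv ℝ G) Y z z :=
    fderiv_fderiv_apply_self_nonneg_of_homogeneous hGsmooth hGhom hGd2 hY z
  exact StrictConvexOn.of_forall_line fun x y hxy =>
    strictConvexOn_comp_exp_affine hGsmooth hGd1 hhess x (sub_ne_zero.2 hxy.symm)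

/-- For a GEV choice-probability-generating function `G` on the open
positive orthant of `ℝ^m`, the function `s ↦ G (exp s₁, …, exp s_m)` is strictly
convex on `ℝ^m`. -/
theorem stmt_0
    (m : ℕ) (hm : 1 ≤ m)
    (G : (Fin m → ℝ) → ℝ)
    (hGnonneg : ∀ Y : Fin m → ℝ, (∀ i, 0 < Y i) → 0 ≤ G Y)
    (hGsmooth : ContDiffOn ℝ 2 G {Y : Fin m → ℝ | ∀ i, 0 < Y i})
    (hGhom : ∀ lam : ℝ, 0 < lam → ∀ Y : Fin m → ℝ, (∀ i, 0 < Y i) →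
      G (lam • Y) = lam * G Y)
    (hGd1 : ∀ Y : Fin m → ℝ, (∀ i, 0 < Y i) → ∀ i : Fin m,
      0 < fderiv ℝ G Y (Pi.single i 1))
    (hGd2 : ∀ Y : Fin m → ℝ, (∀ i, 0 < Y i) → ∀ i j : Fin m, i ≠ j →
      fderiv ℝ (fun W => fderiv ℝ G W (Pi.single i 1)) Y (Pi.single j 1) ≤ 0) :
    StrictConvexOn ℝ (Set.univ : Set (Fin m → ℝ))
      (fun s : Fin m → ℝ => G fun i => Real.exp (s i)) :=
  stmt_0_general m G hGsmooth hGhom hGd1 hGd2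
end

section
/- Let z* ∈ ℝ and (a*, b*) ∈ A, and let β* > 0 denote the common value of the components of b*. Suppose that (a*, b*) minimizes (a, b) ↦ G((exp(a_i − b_i·(z* + c_i)))_i) over A, and that (β*·z* − 1)·exp(β*·z* − 1) = G((exp(a*_i − β*·c_i))_i)·exp(−1). Then the price vector x* defined by x*_i = c_i + z* satisfies: x* maximizes x ↦ Φ(x, a*, b*) over ℝ^m; (a*, b*) minimizes (a, b) ↦ Φ(x*, a, b) over A; hence (x*, a*, b*) is a saddle point of Φ on ℝ^m × A and x* is an optimal solution of the robust problem max_{x∈ℝ^m} min_{(a,b)∈A} Φ(x, a, b). -/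
/-- Expected revenue `Φ(x, a, b)` under a GEV model with CPGF `G` and costs `c`. -/
noncomputable def Phi (m : ℕ) (G : (Fin m → ℝ) → ℝ) (c : Fin m → ℝ)
    (x a b : Fin m → ℝ) : ℝ :=
  (∑ i, (x i - c i) * Real.exp (a i - b i * x i) *
      fderiv ℝ G (fun j => Real.exp (a j - b j * x j)) (Pi.single i 1)) /
    (1 + G fun j => Real.exp (a j - b j * x j))


namespace Stmt3Aux
open Real Finset

variable {m : ℕ} {G : (Fin m → ℝ) → ℝ}

def P (m : ℕ) : Set (Fin m → ℝ) := {Y | ∀ i, 0 < Y i}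

lemma isOpen_P : IsOpen (P m) := by
  have h : P m = Set.pi Set.univ (fun _ : Fin m => Set.Ioi (0:ℝ)) := by
    ext Y; simp [P, Set.mem_pi]
  rw [h]
  exact isOpen_set_pi Set.finite_univ (fun i _ => isOpen_Ioi)

lemma clm_apply_eq_sum (L : (Fin m → ℝ) →L[ℝ] ℝ) (v : Fin m → ℝ) :
    L v = ∑ i, v i * L (Pi.single i 1) := by
  have hv : v = ∑ i, (v i) • (Pi.single i (1:ℝ) : Fin m → ℝ) := by
    funext j
    rw [Finset.sum_apply]
    simp [Pi.single_apply]
  conv_lhs => rw [hv]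
  rw [map_sum]
  exact Finset.sum_congr rfl fun i _ => by rw [map_smul]; rfl

lemma contDiffAt_of (hG : ContDiffOn ℝ 2 G (P m)) {W : Fin m → ℝ} (hW : W ∈ P m) :
    ContDiffAt ℝ 2 G W :=
  hG.contDiffAt (isOpen_P.mem_nhds hW)

lemma diffAt_of (hG : ContDiffOn ℝ 2 G (P m)) {W : Fin m → ℝ} (hW : W ∈ P m) :
    DifferentiableAt ℝ G W :=
  (contDiffAt_of hG hW).differentiableAt two_ne_zero

lemma euler_deriv (hG : ContDiffOn ℝ 2 G (P m))
    (hhom : ∀ lam : ℝ, 0 < lam → ∀ Y : Fin m → ℝ, (∀ i, 0 < Y i) → G (lam • Y) = lam * G Y)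
    {W : Fin m → ℝ} (hW : W ∈ P m) :
    fderiv ℝ G W W = G W := by
  have hd : DifferentiableAt ℝ G W := diffAt_of hG hW
  have hs : HasDerivAt (fun t : ℝ => t • W) W 1 := by
    simpa using (hasDerivAt_id (1:ℝ)).smul_const W
  have hfd : HasFDerivAt G (fderiv ℝ G W) ((1:ℝ) • W) := by
    rw [one_smul]; exact hd.hasFDerivAt
  have h1 : HasDerivAt (fun t : ℝ => G (t • W)) (fderiv ℝ G W W) 1 := by
    simpa [Function.comp_def] using hfd.comp_hasDerivAt 1 hs
  have h2 : (fun t : ℝ => G (t • W)) =ᶠ[nhds (1:ℝ)] fun t => t * G W := by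
    filter_upwards [eventually_gt_nhds zero_lt_one] with t ht
    exact hhom t ht W hW
  have h3 : HasDerivAt (fun t : ℝ => t * G W) (fderiv ℝ G W W) 1 :=
    h1.congr_of_eventuallyEq h2.symm
  have h4 : HasDerivAt (fun t : ℝ => t * G W) (G W) 1 := by
    simpa using (hasDerivAt_id (1:ℝ)).mul_const (G W)
  exact h3.unique h4

lemma fderiv_hom (hG : ContDiffOn ℝ 2 G (P m))
    (hhom : ∀ lam : ℝ, 0 < lam → ∀ Y : Fin m → ℝ, (∀ i, 0 < Y i) → G (lam • Y) = lam * G Y)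
    {W : Fin m → ℝ} (hW : W ∈ P m) {lam : ℝ} (hl : 0 < lam) :
    fderiv ℝ G (lam • W) = fderiv ℝ G W := by
  have hWl : lam • W ∈ P m := fun i => by
    have := hW i; simp only [Pi.smul_apply, smul_eq_mul]; positivity
  have hdl : DifferentiableAt ℝ G (lam • W) := diffAt_of hG hWl
  have hdW : DifferentiableAt ℝ G W := diffAt_of hG hW
  have hs : HasFDerivAt (fun Y : Fin m → ℝ => lam • Y)
      (lam • ContinuousLinearMap.id ℝ (Fin m → ℝ)) W := by
    have := (ContinuousLinearMap.id ℝ (Fin m → ℝ)).hasFDerivAt (x := W)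
    simpa using this.const_smul lam
  have h1 : HasFDerivAt (fun Y : Fin m → ℝ => G (lam • Y))
      ((fderiv ℝ G (lam • W)).comp (lam • ContinuousLinearMap.id ℝ (Fin m → ℝ))) W :=
    hdl.hasFDerivAt.comp W hs
  have h2 : HasFDerivAt (fun Y : Fin m → ℝ => lam * G Y) (lam • fderiv ℝ G W) W :=
    hdW.hasFDerivAt.const_mul lam
  have heq : (fun Y : Fin m → ℝ => G (lam • Y)) =ᶠ[nhds W] fun Y => lam * G Y := by
    filter_upwards [isOpen_P.mem_nhds hW] with Y hY
    exact hhom lam hl Y hY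
  have h3 : HasFDerivAt (fun Y : Fin m → ℝ => lam * G Y)
      ((fderiv ℝ G (lam • W)).comp (lam • ContinuousLinearMap.id ℝ (Fin m → ℝ))) W :=
    h1.congr_of_eventuallyEq heq.symm
  have hcomp := h3.unique h2
  ext v
  have happ := congrArg (fun (L : (Fin m → ℝ) →L[ℝ] ℝ) => L v) hcomp
  simp only [ContinuousLinearMap.coe_comp', Function.comp_apply,
    ContinuousLinearMap.smul_apply, ContinuousLinearMap.coe_id', id_eq, smul_eq_mul] at happ
  -- happ : fderiv ℝ G (lam • W) (lam • v) = lam * fderiv ℝ G W v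
  rw [map_smul] at happ
  simp only [smul_eq_mul] at happ
  exact mul_left_cancel₀ (ne_of_gt hl) happ

lemma g_hasFDeriv (hG : ContDiffOn ℝ 2 G (P m)) {W : Fin m → ℝ} (hW : W ∈ P m) (i : Fin m) :
    HasFDerivAt (fun Y => fderiv ℝ G Y (Pi.single i 1))
      ((fderiv ℝ (fderiv ℝ G) W).flip (Pi.single i 1)) W := by
  have hd2 : DifferentiableAt ℝ (fderiv ℝ G) W := by
    have h := (contDiffAt_of hG hW).fderiv_right (m := 1) (by norm_num)
    exact h.differentiableAt one_ne_zero
  have := hd2.hasFDerivAt.clm_apply (hasFDerivAt_const (Pi.single i (1:ℝ)) W)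
  simpa using this

lemma euler_snd (hG : ContDiffOn ℝ 2 G (P m))
    (hhom : ∀ lam : ℝ, 0 < lam → ∀ Y : Fin m → ℝ, (∀ i, 0 < Y i) → G (lam • Y) = lam * G Y)
    {W : Fin m → ℝ} (hW : W ∈ P m) (i : Fin m) :
    ∑ j, W j * fderiv ℝ (fun Y => fderiv ℝ G Y (Pi.single i 1)) W (Pi.single j 1) = 0 := by
  set g : (Fin m → ℝ) → ℝ := fun Y => fderiv ℝ G Y (Pi.single i 1) with hg
  have hgd : HasFDerivAt g ((fderiv ℝ (fderiv ℝ G) W).flip (Pi.single i 1)) W :=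
    g_hasFDeriv hG hW i
  have hs : HasDerivAt (fun t : ℝ => t • W) W 1 := by
    simpa using (hasDerivAt_id (1:ℝ)).smul_const W
  have hfd : HasFDerivAt g (fderiv ℝ g W) ((1:ℝ) • W) := by
    rw [one_smul]; exact hgd.differentiableAt.hasFDerivAt
  have h1 : HasDerivAt (fun t : ℝ => g (t • W)) (fderiv ℝ g W W) 1 := by
    simpa [Function.comp_def] using hfd.comp_hasDerivAt 1 hs
  have h2 : (fun t : ℝ => g (t • W)) =ᶠ[nhds (1:ℝ)] fun _ => g W := by
    filter_upwards [eventually_gt_nhds zero_lt_one] with t ht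
    show fderiv ℝ G (t • W) (Pi.single i 1) = fderiv ℝ G W (Pi.single i 1)
    rw [fderiv_hom hG hhom hW ht]
  have h3 : HasDerivAt (fun _ : ℝ => g W) (fderiv ℝ g W W) 1 :=
    h1.congr_of_eventuallyEq h2.symm
  have h4 : fderiv ℝ g W W = 0 := h3.unique (hasDerivAt_const 1 (g W))
  calc ∑ j, W j * fderiv ℝ g W (Pi.single j 1) = fderiv ℝ g W W :=
        (clm_apply_eq_sum _ W).symm
    _ = 0 := h4

lemma H_symm (hG : ContDiffOn ℝ 2 G (P m)) {W : Fin m → ℝ} (hW : W ∈ P m) (i j : Fin m) :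
    fderiv ℝ (fun Y => fderiv ℝ G Y (Pi.single i 1)) W (Pi.single j 1)
      = fderiv ℝ (fun Y => fderiv ℝ G Y (Pi.single j 1)) W (Pi.single i 1) := by
  have hs : IsSymmSndFDerivAt ℝ G W := (contDiffAt_of hG hW).isSymmSndFDerivAt (by simp)
  rw [(g_hasFDeriv hG hW i).fderiv, (g_hasFDeriv hG hW j).fderiv]
  simpa using hs (Pi.single j 1) (Pi.single i 1)

lemma quad_nonneg (hG : ContDiffOn ℝ 2 G (P m))
    (hhom : ∀ lam : ℝ, 0 < lam → ∀ Y : Fin m → ℝ, (∀ i, 0 < Y i) → G (lam • Y) = lam * G Y)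
    (hGd2 : ∀ Y : Fin m → ℝ, (∀ i, 0 < Y i) → ∀ i j : Fin m, i ≠ j →
      fderiv ℝ (fun W => fderiv ℝ G W (Pi.single i 1)) Y (Pi.single j 1) ≤ 0)
    {W : Fin m → ℝ} (hW : W ∈ P m) (v : Fin m → ℝ) :
    0 ≤ ∑ i, ∑ j, v i * v j *
      fderiv ℝ (fun Y => fderiv ℝ G Y (Pi.single i 1)) W (Pi.single j 1) := by
  set H : Fin m → Fin m → ℝ :=
    fun i j => fderiv ℝ (fun Y => fderiv ℝ G Y (Pi.single i 1)) W (Pi.single j 1) with hH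
  have hsymm : ∀ i j, H i j = H j i := fun i j => H_symm hG hW i j
  have heuler : ∀ i, ∑ j, W j * H i j = 0 := fun i => euler_snd hG hhom hW i
  have hWpos : ∀ i, 0 < W i := hW
  have hneg : ∀ i j, i ≠ j → H i j ≤ 0 := fun i j hij => hGd2 W hW i j hij
  set s : Fin m → ℝ := fun i => v i / W i with hsdef
  have hv : ∀ i, v i = s i * W i := fun i => by
    show v i = v i / W i * W i
    rw [div_mul_cancel₀ _ (hWpos i).ne']
  have step : ∀ i j, v i * v j * H i j
      = (-(1/2) * H i j * (W i * W j) * (s i - s j)^2)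
        + (1/2) * (s i^2 * W i * (W j * H i j))
        + (1/2) * (s j^2 * W j * (W i * H i j)) := by
    intro i j; rw [hv i, hv j]; ring
  have h1 : ∀ i, ∑ j, (1/2) * (s i^2 * W i * (W j * H i j)) = 0 := by
    intro i
    have e : ∑ j, (1/2) * (s i^2 * W i * (W j * H i j))
        = (1/2) * (s i^2 * W i) * ∑ j, W j * H i j := by
      rw [Finset.mul_sum]; exact Finset.sum_congr rfl fun j _ => by ring
    rw [e, heuler i, mul_zero]
  have h2 : ∑ i, ∑ j, (1/2) * (s j^2 * W j * (W i * H i j)) = 0 := by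
    rw [Finset.sum_comm]
    refine Finset.sum_eq_zero fun j _ => ?_
    have e : ∑ i, (1/2) * (s j^2 * W j * (W i * H i j))
        = (1/2) * (s j^2 * W j) * ∑ i, W i * H j i := by
      rw [Finset.mul_sum]
      exact Finset.sum_congr rfl fun i _ => by rw [hsymm i j]; ring
    rw [e, heuler j, mul_zero]
  have hkey : ∑ i, ∑ j, v i * v j * H i j
      = ∑ i, ∑ j, (-(1/2) * H i j * (W i * W j) * (s i - s j)^2) := by
    calc ∑ i, ∑ j, v i * v j * H i j
        = ∑ i, ∑ j, ((-(1/2) * H i j * (W i * W j) * (s i - s j)^2)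
            + (1/2) * (s i^2 * W i * (W j * H i j))
            + (1/2) * (s j^2 * W j * (W i * H i j))) :=
          Finset.sum_congr rfl fun i _ => Finset.sum_congr rfl fun j _ => step i j
      _ = ∑ i, ∑ j, (-(1/2) * H i j * (W i * W j) * (s i - s j)^2) := by
          simp only [Finset.sum_add_distrib]
          rw [Finset.sum_eq_zero (fun i _ => h1 i), h2, add_zero, add_zero]
  rw [hkey]
  refine Finset.sum_nonneg fun i _ => Finset.sum_nonneg fun j _ => ?_
  rcases eq_or_ne i j with rfl | hij
  · simp
  · have hne : 0 ≤ -(1/2) * H i j := by nlinarith [hneg i j hij]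
    have hww : 0 < W i * W j := mul_pos (hWpos i) (hWpos j)
    exact mul_nonneg (mul_nonneg hne hww.le) (sq_nonneg _)

lemma grad_le (hG : ContDiffOn ℝ 2 G (P m))
    (hhom : ∀ lam : ℝ, 0 < lam → ∀ Y : Fin m → ℝ, (∀ i, 0 < Y i) → G (lam • Y) = lam * G Y)
    (hGd2 : ∀ Y : Fin m → ℝ, (∀ i, 0 < Y i) → ∀ i j : Fin m, i ≠ j →
      fderiv ℝ (fun W => fderiv ℝ G W (Pi.single i 1)) Y (Pi.single j 1) ≤ 0)
    {Y u : Fin m → ℝ} (hY : Y ∈ P m) (hu : u ∈ P m) :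
    fderiv ℝ G Y u ≤ G u := by
  set v : Fin m → ℝ := u - Y with hvdef
  set W : ℝ → (Fin m → ℝ) := fun t => Y + t • v with hWdef
  have hW0 : W 0 = Y := by simp [hWdef]
  have hW1 : W 1 = u := by simp [hWdef, hvdef]
  have hWmem : ∀ t ∈ Set.Icc (0:ℝ) 1, W t ∈ P m := by
    intro t ht i
    have h1 := hY i
    have h2 := hu i
    show 0 < Y i + t * (u i - Y i)
    rcases eq_or_lt_of_le ht.1 with h | h
    · nlinarith
    · nlinarith [mul_pos h h2, mul_nonneg (sub_nonneg.2 ht.2) h1.le]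
  have hWd : ∀ t : ℝ, HasDerivAt W v t := by
    intro t
    have := ((hasDerivAt_id t).smul_const v).const_add Y
    rw [one_smul] at this
    exact this
  set φ : ℝ → ℝ := fun t => G (W t) with hφdef
  set ψ : ℝ → ℝ := fun t => fderiv ℝ G (W t) v with hψdef
  have hφ : ∀ t ∈ Set.Icc (0:ℝ) 1, HasDerivAt φ (ψ t) t := by
    intro t ht
    simpa [Function.comp_def]
      using (diffAt_of hG (hWmem t ht)).hasFDerivAt.comp_hasDerivAt t (hWd t)
  set Q : ℝ → ℝ := fun t => ∑ i, ∑ j, v i * v j *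
      fderiv ℝ (fun Z => fderiv ℝ G Z (Pi.single i 1)) (W t) (Pi.single j 1) with hQdef
  have hψd : ∀ t ∈ Set.Icc (0:ℝ) 1, HasDerivAt ψ (Q t) t := by
    intro t ht
    have hψeq : ψ = fun t => ∑ i, v i * fderiv ℝ G (W t) (Pi.single i 1) := by
      funext r; exact clm_apply_eq_sum _ v
    have hterm : ∀ i ∈ univ, HasDerivAt (fun r => v i * fderiv ℝ G (W r) (Pi.single i 1))
        (v i * ∑ j, v j *
          fderiv ℝ (fun Z => fderiv ℝ G Z (Pi.single i 1)) (W t) (Pi.single j 1)) t := by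
      intro i _
      have hgi : HasDerivAt (fun r => fderiv ℝ G (W r) (Pi.single i 1))
          (((fderiv ℝ (fderiv ℝ G) (W t)).flip (Pi.single i 1)) v) t := by
        simpa [Function.comp_def] using (g_hasFDeriv hG (hWmem t ht) i).comp_hasDerivAt t (hWd t)
      have hval : ((fderiv ℝ (fderiv ℝ G) (W t)).flip (Pi.single i 1)) v
          = ∑ j, v j * fderiv ℝ (fun Z => fderiv ℝ G Z (Pi.single i 1)) (W t) (Pi.single j 1) := by
        rw [← (g_hasFDeriv hG (hWmem t ht) i).fderiv]
        exact clm_apply_eq_sum _ v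
      rw [hval] at hgi
      exact hgi.const_mul (v i)
    have hsum := HasDerivAt.fun_sum hterm
    rw [hψeq]
    refine hsum.congr_deriv ?_
    rw [hQdef]
    refine Finset.sum_congr rfl fun i _ => ?_
    rw [Finset.mul_sum]
    exact Finset.sum_congr rfl fun j _ => by ring
  have hmono : MonotoneOn ψ (Set.Icc (0:ℝ) 1) := by
    apply monotoneOn_of_deriv_nonneg (convex_Icc 0 1)
    · exact fun t ht => (hψd t ht).continuousAt.continuousWithinAt
    · intro t ht
      rw [interior_Icc] at ht
      exact (hψd t (Set.Ioo_subset_Icc_self ht)).differentiableAt.differentiableWithinAt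
    · intro t ht
      rw [interior_Icc] at ht
      rw [(hψd t (Set.Ioo_subset_Icc_self ht)).deriv]
      exact quad_nonneg hG hhom hGd2 (hWmem t (Set.Ioo_subset_Icc_self ht)) v
  obtain ⟨ξ, hξ, heq⟩ := exists_hasDerivAt_eq_slope φ ψ zero_lt_one
    (fun t ht => (hφ t ht).continuousAt.continuousWithinAt)
    (fun t ht => hφ t (Set.Ioo_subset_Icc_self ht))
  have hψ0le : ψ 0 ≤ ψ ξ :=
    hmono (Set.mem_Icc.2 ⟨le_rfl, zero_le_one⟩) (Set.Ioo_subset_Icc_self hξ) hξ.1.le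
  have hψ0 : ψ 0 = fderiv ℝ G Y u - G Y := by
    rw [hψdef]
    show fderiv ℝ G (W 0) v = _
    rw [hW0, hvdef]
    rw [map_sub, euler_deriv hG hhom hY]
  have heq' : ψ ξ = G u - G Y := by
    rw [heq, hφdef]
    show (G (W 1) - G (W 0)) / (1 - 0) = _
    rw [hW0, hW1]; ring
  rw [hψ0] at hψ0le
  rw [heq'] at hψ0le
  linarith

lemma euler_sum (hG : ContDiffOn ℝ 2 G (P m))
    (hhom : ∀ lam : ℝ, 0 < lam → ∀ Y : Fin m → ℝ, (∀ i, 0 < Y i) → G (lam • Y) = lam * G Y)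
    {W : Fin m → ℝ} (hW : W ∈ P m) :
    ∑ i, W i * fderiv ℝ G W (Pi.single i 1) = G W := by
  rw [← clm_apply_eq_sum]
  exact euler_deriv hG hhom hW

/-- value of Phi at a constant-markup price vector -/
lemma phi_markup (hG : ContDiffOn ℝ 2 G (P m))
    (hhom : ∀ lam : ℝ, 0 < lam → ∀ Y : Fin m → ℝ, (∀ i, 0 < Y i) → G (lam • Y) = lam * G Y)
    (c : Fin m → ℝ) (z : ℝ) (a b : Fin m → ℝ) :
    Phi m G c (fun i => c i + z) a b =
      z * G (fun j => Real.exp (a j - b j * (c j + z))) /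
        (1 + G (fun j => Real.exp (a j - b j * (c j + z)))) := by
  unfold Phi
  have hYP : (fun j => Real.exp (a j - b j * (c j + z))) ∈ P m := fun i => Real.exp_pos _
  have hnum : ∑ i, (c i + z - c i) * Real.exp (a i - b i * (c i + z)) *
        fderiv ℝ G (fun j => Real.exp (a j - b j * (c j + z))) (Pi.single i 1)
      = z * G (fun j => Real.exp (a j - b j * (c j + z))) := by
    rw [← euler_sum hG hhom hYP, Finset.mul_sum]
    exact Finset.sum_congr rfl fun i _ => by ring
  rw [← hnum]

/-- uniform lower bound for Phi, giving BddBelow -/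
lemma phi_lower (hG : ContDiffOn ℝ 2 G (P m))
    (hGnonneg : ∀ Y : Fin m → ℝ, (∀ i, 0 < Y i) → 0 ≤ G Y)
    (hhom : ∀ lam : ℝ, 0 < lam → ∀ Y : Fin m → ℝ, (∀ i, 0 < Y i) → G (lam • Y) = lam * G Y)
    (hGd1 : ∀ Y : Fin m → ℝ, (∀ i, 0 < Y i) → ∀ i : Fin m,
      0 < fderiv ℝ G Y (Pi.single i 1))
    (c : Fin m → ℝ) (x a b : Fin m → ℝ) :
    -(∑ i, |x i - c i|) ≤ Phi m G c x a b := by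
  unfold Phi
  set Y : Fin m → ℝ := fun j => Real.exp (a j - b j * x j) with hYdef
  have hYP : Y ∈ P m := fun i => Real.exp_pos _
  have hGY : 0 ≤ G Y := hGnonneg Y hYP
  have hden : (0:ℝ) < 1 + G Y := by linarith
  have hgpos : ∀ i, 0 < fderiv ℝ G Y (Pi.single i 1) := hGd1 Y hYP
  have hsum : ∑ i, Y i * fderiv ℝ G Y (Pi.single i 1) = G Y := euler_sum hG hhom hYP
  have hterm_le : ∀ i, Y i * fderiv ℝ G Y (Pi.single i 1) ≤ G Y := by
    intro i
    rw [← hsum]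
    exact Finset.single_le_sum
      (fun j _ => (mul_pos (hYP j) (hgpos j)).le) (Finset.mem_univ i)
  have hnum : -((∑ i, |x i - c i|) * G Y) ≤
      ∑ i, (x i - c i) * Y i * fderiv ℝ G Y (Pi.single i 1) := by
    have e : -((∑ i, |x i - c i|) * G Y) = ∑ i, -(|x i - c i| * G Y) := by
      rw [Finset.sum_mul, ← Finset.sum_neg_distrib]
    rw [e]
    refine Finset.sum_le_sum fun i _ => ?_
    have hpos : 0 ≤ Y i * fderiv ℝ G Y (Pi.single i 1) :=
      (mul_pos (hYP i) (hgpos i)).le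
    have h1 : -|x i - c i| * (Y i * fderiv ℝ G Y (Pi.single i 1))
        ≤ (x i - c i) * (Y i * fderiv ℝ G Y (Pi.single i 1)) :=
      mul_le_mul_of_nonneg_right (neg_abs_le _) hpos
    have h2 : -|x i - c i| * G Y
        ≤ -|x i - c i| * (Y i * fderiv ℝ G Y (Pi.single i 1)) :=
      mul_le_mul_of_nonpos_left (hterm_le i) (neg_nonpos.2 (abs_nonneg _))
    nlinarith [h1, h2]
  have hS : (0:ℝ) ≤ ∑ i, |x i - c i| := Finset.sum_nonneg fun i _ => abs_nonneg _
  rw [le_div_iff₀ hden]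
  have e2 : -(∑ i, |x i - c i|) * (1 + G Y)
      = -(∑ i, |x i - c i|) + -((∑ i, |x i - c i|) * G Y) := by ring
  rw [e2]
  linarith

end Stmt3Aux

/-- If `(a*, b*)` (with common price sensitivity `β* > 0`) minimizes
`(a,b) ↦ G(exp(a_i − b_i(z* + c_i)))` over `A`, and `z*` solves the fixed-point
equation `(β* z* − 1) exp(β* z* − 1) = G(exp(a*_i − β* c_i)) e^{−1}`, then the
constant-markup prices `x*_i = c_i + z*` maximize `Φ(·, a*, b*)`, `(a*, b*)`
minimizes `Φ(x*, ·, ·)` over `A` (so `(x*, a*, b*)` is a saddle point), and `x*`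
solves the robust problem. -/
theorem stmt_3
    (m : ℕ) (hm : 1 ≤ m)
    (G : (Fin m → ℝ) → ℝ)
    (hGnonneg : ∀ Y : Fin m → ℝ, (∀ i, 0 < Y i) → 0 ≤ G Y)
    (hGsmooth : ContDiffOn ℝ 2 G {Y : Fin m → ℝ | ∀ i, 0 < Y i})
    (hGhom : ∀ lam : ℝ, 0 < lam → ∀ Y : Fin m → ℝ, (∀ i, 0 < Y i) →
      G (lam • Y) = lam * G Y)
    (hGd1 : ∀ Y : Fin m → ℝ, (∀ i, 0 < Y i) → ∀ i : Fin m,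
      0 < fderiv ℝ G Y (Pi.single i 1))
    (hGd2 : ∀ Y : Fin m → ℝ, (∀ i, 0 < Y i) → ∀ i j : Fin m, i ≠ j →
      fderiv ℝ (fun W => fderiv ℝ G W (Pi.single i 1)) Y (Pi.single j 1) ≤ 0)
    (c : Fin m → ℝ) (hc : ∀ i, 0 ≤ c i)
    (A : Set ((Fin m → ℝ) × (Fin m → ℝ)))
    (hAne : A.Nonempty) (hAconv : Convex ℝ A) (hAcomp : IsCompact A)
    (hAb : ∀ ab ∈ A, (∀ i j : Fin m, ab.2 i = ab.2 j) ∧ ∀ i, 0 < ab.2 i)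
    (zs : ℝ) (abs : (Fin m → ℝ) × (Fin m → ℝ)) (habs : abs ∈ A)
    (β : ℝ) (hβ : 0 < β) (hβval : ∀ i, abs.2 i = β)
    (hmin : ∀ ab ∈ A,
      G (fun i => Real.exp (abs.1 i - abs.2 i * (zs + c i))) ≤
        G (fun i => Real.exp (ab.1 i - ab.2 i * (zs + c i))))
    (hfix : (β * zs - 1) * Real.exp (β * zs - 1) =
      G (fun i => Real.exp (abs.1 i - β * c i)) * Real.exp (-1)) :
    (∀ x : Fin m → ℝ,
      Phi m G c x abs.1 abs.2 ≤ Phi m G c (fun i => c i + zs) abs.1 abs.2) ∧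
    (∀ ab ∈ A,
      Phi m G c (fun i => c i + zs) abs.1 abs.2 ≤
        Phi m G c (fun i => c i + zs) ab.1 ab.2) ∧
    (∀ x : Fin m → ℝ,
      sInf ((fun ab => Phi m G c x ab.1 ab.2) '' A) ≤
        sInf ((fun ab => Phi m G c (fun i => c i + zs) ab.1 ab.2) '' A)) := by
  have hGP : ContDiffOn ℝ 2 G (Stmt3Aux.P m) := hGsmooth
  set u : Fin m → ℝ := fun i => Real.exp (abs.1 i - β * c i) with hu_def
  have huP : u ∈ Stmt3Aux.P m := fun i => Real.exp_pos _
  have hfix' : β * zs - 1 = G u * Real.exp (-(β * zs)) := by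
    have e1 : Real.exp (β * zs - 1) * Real.exp (1 - β * zs) = 1 := by
      rw [← Real.exp_add, show (β * zs - 1) + (1 - β * zs) = 0 by ring, Real.exp_zero]
    have e2 : Real.exp (-1) * Real.exp (1 - β * zs) = Real.exp (-(β * zs)) := by
      rw [← Real.exp_add, show (-1 : ℝ) + (1 - β * zs) = -(β * zs) by ring]
    calc β * zs - 1
        = (β * zs - 1) * (Real.exp (β * zs - 1) * Real.exp (1 - β * zs)) := by
          rw [e1, mul_one]
      _ = ((β * zs - 1) * Real.exp (β * zs - 1)) * Real.exp (1 - β * zs) := by ring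
      _ = (G u * Real.exp (-1)) * Real.exp (1 - β * zs) := by rw [hfix]
      _ = G u * Real.exp (-(β * zs)) := by rw [mul_assoc, e2]
  have hGu : 0 ≤ G u := hGnonneg u huP
  have hz1 : 1 ≤ β * zs := by
    nlinarith [mul_nonneg hGu (Real.exp_pos (-(β * zs))).le]
  have hzpos : 0 < zs := by nlinarith
  have hYstar : (fun j => Real.exp (abs.1 j - abs.2 j * (c j + zs)))
      = Real.exp (-(β * zs)) • u := by
    funext j
    simp only [Pi.smul_apply, smul_eq_mul, hu_def, hβval j, ← Real.exp_add]
    congr 1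
    ring
  have hSstar : G (fun j => Real.exp (abs.1 j - abs.2 j * (c j + zs))) = β * zs - 1 := by
    rw [hYstar, hGhom _ (Real.exp_pos _) u huP, mul_comm]
    exact hfix'.symm
  have hPhiStar : Phi m G c (fun i => c i + zs) abs.1 abs.2 = zs - 1 / β := by
    rw [Stmt3Aux.phi_markup hGP hGhom c zs abs.1 abs.2, hSstar,
      show 1 + (β * zs - 1) = β * zs by ring]
    rw [div_eq_iff (by positivity : (β * zs : ℝ) ≠ 0)]
    field_simp
  -- PART 1
  have part1 : ∀ x : Fin m → ℝ,
      Phi m G c x abs.1 abs.2 ≤ Phi m G c (fun i => c i + zs) abs.1 abs.2 := by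
    intro x
    rw [hPhiStar]
    unfold Phi
    set Y : Fin m → ℝ := fun j => Real.exp (abs.1 j - abs.2 j * x j) with hYdef
    have hYP : Y ∈ Stmt3Aux.P m := fun i => Real.exp_pos _
    have hGY : 0 ≤ G Y := hGnonneg Y hYP
    have hden : (0:ℝ) < 1 + G Y := by linarith
    rw [div_le_iff₀ hden]
    have hterm : ∀ i, (x i - c i) * Real.exp (abs.1 i - abs.2 i * x i) *
          fderiv ℝ G Y (Pi.single i 1)
        ≤ (zs - 1 / β) * (Y i * fderiv ℝ G Y (Pi.single i 1))
          + (1 / β) * (Real.exp (-(β * zs)) * (u i * fderiv ℝ G Y (Pi.single i 1))) := by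
      intro i
      have hg := hGd1 Y hYP i
      have hYg : 0 < Y i * fderiv ℝ G Y (Pi.single i 1) := mul_pos (hYP i) hg
      have hexp : β * ((x i - c i) - zs) + 1 ≤ Real.exp (β * ((x i - c i) - zs)) :=
        Real.add_one_le_exp _
      have h' := mul_le_mul_of_nonneg_left hexp
        (le_of_lt (by positivity : (0:ℝ) < 1 / β))
      have hid : (1 / β) * (β * ((x i - c i) - zs) + 1) = (x i - c i) - zs + 1 / β := by
        field_simp
      rw [hid] at h'
      have hscal : x i - c i ≤ (zs - 1 / β)
          + (1 / β) * Real.exp (β * ((x i - c i) - zs)) := by linarith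
      have hprod : Real.exp (β * ((x i - c i) - zs)) * Y i
          = Real.exp (-(β * zs)) * u i := by
        show Real.exp (β * ((x i - c i) - zs)) * Real.exp (abs.1 i - abs.2 i * x i)
          = Real.exp (-(β * zs)) * Real.exp (abs.1 i - β * c i)
        rw [hβval i, ← Real.exp_add, ← Real.exp_add]
        congr 1
        ring
      have hYi : Real.exp (abs.1 i - abs.2 i * x i) = Y i := rfl
      rw [hYi]
      calc (x i - c i) * Y i * fderiv ℝ G Y (Pi.single i 1)
          ≤ ((zs - 1 / β) + (1 / β) * Real.exp (β * ((x i - c i) - zs)))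
            * (Y i * fderiv ℝ G Y (Pi.single i 1)) := by
            have := mul_le_mul_of_nonneg_right hscal hYg.le
            calc (x i - c i) * Y i * fderiv ℝ G Y (Pi.single i 1)
                = (x i - c i) * (Y i * fderiv ℝ G Y (Pi.single i 1)) := by ring
              _ ≤ _ := this
        _ = (zs - 1 / β) * (Y i * fderiv ℝ G Y (Pi.single i 1))
            + (1 / β) * ((Real.exp (β * ((x i - c i) - zs)) * Y i)
              * fderiv ℝ G Y (Pi.single i 1)) := by ring
        _ = (zs - 1 / β) * (Y i * fderiv ℝ G Y (Pi.single i 1))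
            + (1 / β) * (Real.exp (-(β * zs)) * (u i * fderiv ℝ G Y (Pi.single i 1))) := by
            rw [hprod]; ring
    have hR : (zs - 1 / β) * G Y
        + (1 / β) * (Real.exp (-(β * zs)) * ∑ i, u i * fderiv ℝ G Y (Pi.single i 1))
        = ∑ i, ((zs - 1 / β) * (Y i * fderiv ℝ G Y (Pi.single i 1))
          + (1 / β) * (Real.exp (-(β * zs)) * (u i * fderiv ℝ G Y (Pi.single i 1)))) := by
      rw [← Stmt3Aux.euler_sum hGP hGhom hYP, Finset.mul_sum, Finset.mul_sum, Finset.mul_sum,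
        ← Finset.sum_add_distrib]
    have hsum : ∑ i, (x i - c i) * Real.exp (abs.1 i - abs.2 i * x i) *
          fderiv ℝ G Y (Pi.single i 1)
        ≤ (zs - 1 / β) * G Y
          + (1 / β) * (Real.exp (-(β * zs)) * ∑ i, u i * fderiv ℝ G Y (Pi.single i 1)) := by
      rw [hR]
      exact Finset.sum_le_sum fun i _ => hterm i
    have hgrad : ∑ i, u i * fderiv ℝ G Y (Pi.single i 1) ≤ G u := by
      rw [← Stmt3Aux.clm_apply_eq_sum]
      exact Stmt3Aux.grad_le hGP hGhom hGd2 hYP huP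
    have h2 : (1 / β) * (Real.exp (-(β * zs)) * ∑ i, u i * fderiv ℝ G Y (Pi.single i 1))
        ≤ (1 / β) * (Real.exp (-(β * zs)) * G u) :=
      mul_le_mul_of_nonneg_left
        (mul_le_mul_of_nonneg_left hgrad (Real.exp_pos (-(β * zs))).le)
        (le_of_lt (by positivity : (0:ℝ) < 1 / β))
    have h3 : Real.exp (-(β * zs)) * G u = β * zs - 1 := by
      rw [mul_comm]; exact hfix'.symm
    have h4 : (1 / β) * (β * zs - 1) = zs - 1 / β := by
      field_simp
    have h5 : (zs - 1 / β) * (1 + G Y) = (zs - 1 / β) * G Y + (zs - 1 / β) := by ring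
    rw [h3] at h2
    rw [h4] at h2
    linarith
  -- PART 2
  have hmin' : ∀ ab ∈ A, (β * zs - 1) ≤
      G (fun j => Real.exp (ab.1 j - ab.2 j * (c j + zs))) := by
    intro ab hab
    have h := hmin ab hab
    have e : ∀ p : (Fin m → ℝ) × (Fin m → ℝ),
        (fun j => Real.exp (p.1 j - p.2 j * (zs + c j)))
          = fun j => Real.exp (p.1 j - p.2 j * (c j + zs)) := by
      intro p; funext j; rw [add_comm]
    rw [e abs, e ab, hSstar] at h
    exact h
  have part2 : ∀ ab ∈ A,
      Phi m G c (fun i => c i + zs) abs.1 abs.2 ≤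
        Phi m G c (fun i => c i + zs) ab.1 ab.2 := by
    intro ab hab
    rw [hPhiStar, Stmt3Aux.phi_markup hGP hGhom c zs ab.1 ab.2]
    set S := G (fun j => Real.exp (ab.1 j - ab.2 j * (c j + zs))) with hSdef
    have hSge : β * zs - 1 ≤ S := hmin' ab hab
    have hS0 : (0:ℝ) ≤ S := by linarith
    rw [le_div_iff₀ (by linarith : (0:ℝ) < 1 + S)]
    have hβz : (zs - 1 / β) * (1 + S) ≤ zs * S := by
      have h6 : (zs - 1 / β) * (1 + S) = zs - 1/β + zs * S - (1/β) * S := by ring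
      have h7 : zs - 1/β - (1/β) * S ≤ 0 := by
        have h8 : (1/β) * (β * zs - 1) ≤ (1/β) * S :=
          mul_le_mul_of_nonneg_left hSge (by positivity)
        have h9 : (1/β) * (β * zs - 1) = zs - 1/β := by field_simp
        linarith
      linarith
    exact hβz
  -- PART 3
  have part3 : ∀ x : Fin m → ℝ,
      sInf ((fun ab => Phi m G c x ab.1 ab.2) '' A) ≤
        sInf ((fun ab => Phi m G c (fun i => c i + zs) ab.1 ab.2) '' A) := by
    intro x
    have hbdd : BddBelow ((fun ab => Phi m G c x ab.1 ab.2) '' A) := by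
      refine ⟨-(∑ i, |x i - c i|), ?_⟩
      rintro _ ⟨ab, hab, rfl⟩
      exact Stmt3Aux.phi_lower hGP hGnonneg hGhom hGd1 c x ab.1 ab.2
    have hmem : Phi m G c x abs.1 abs.2 ∈ (fun ab => Phi m G c x ab.1 ab.2) '' A :=
      ⟨abs, habs, rfl⟩
    calc sInf ((fun ab => Phi m G c x ab.1 ab.2) '' A)
        ≤ Phi m G c x abs.1 abs.2 := csInf_le hbdd hmem
      _ ≤ Phi m G c (fun i => c i + zs) abs.1 abs.2 := part1 x
      _ ≤ sInf ((fun ab => Phi m G c (fun i => c i + zs) ab.1 ab.2) '' A) := by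
          refine le_csInf ⟨_, ⟨abs, habs, rfl⟩⟩ ?_
          rintro _ ⟨ab, hab, rfl⟩
          exact part2 ab hab
  exact ⟨part1, part2, part3⟩
end

section
/- For every p ∈ ℝ^N with p_n > 0 for all n and Σ_n p_n < 1, there exists a unique z ∈ ℝ^N such that p_n = ĝ_n(z_n) / (1 + Σ_{l=1}^N ĝ_l(z_l)) for every n = 1,…,N; this z is characterized by ĝ_n(z_n) = p_n / (1 − Σ_{l=1}^N p_l) for every n. -/
/-!
Fix a block `n` and a parameter `(a, b) ∈ Aⁿ` with `b ≡ β > 0`. Homogeneity of `Gⁿ` factors the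
utility as `exp (-β z) · Gⁿ(Y | 0, a, b)`, and Euler's identity `Gⁿ(Y) = Σ Yᵢ ∂ᵢGⁿ(Y)` makes the
second factor positive. So `ĝ_n` is a minimum, over a compact set, of positive exponentials
decaying in `z`: it is continuous, strictly decreasing, and tends to `∞` and `0` at `∓∞`, hence a
bijection `ℝ → (0, ∞)`. Solving `p = ĝ / (1 + Σ ĝ)` for `ĝ` gives `ĝ = p / (1 - Σ p)`.
-/

/-- `G^n(Y^n | z, a^n, b^n) = G^n((exp(a_i − b_i (z + c_i)))_{i ∈ V_n})` where the
partition `V_n = {i | part i = n}`. -/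
noncomputable def GzP (m N : ℕ) (part : Fin m → Fin N)
    (Gn : ∀ n : Fin N, ({i : Fin m // part i = n} → ℝ) → ℝ)
    (c : Fin m → ℝ) (n : Fin N) (z : ℝ)
    (ab : ({i : Fin m // part i = n} → ℝ) × ({i : Fin m // part i = n} → ℝ)) : ℝ :=
  Gn n fun i => Real.exp (ab.1 i - ab.2 i * (z + c i.1))

/-- `ĝ_n(z) = min_{(a^n, b^n) ∈ A^n} G^n(Y^n | z, a^n, b^n)`. -/
noncomputable def ghatP (m N : ℕ) (part : Fin m → Fin N)
    (Gn : ∀ n : Fin N, ({i : Fin m // part i = n} → ℝ) → ℝ)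
    (c : Fin m → ℝ)
    (An : ∀ n : Fin N,
      Set (({i : Fin m // part i = n} → ℝ) × ({i : Fin m // part i = n} → ℝ)))
    (n : Fin N) (z : ℝ) : ℝ :=
  sInf (GzP m N part Gn c n z '' An n)

open Real Set Filter Topology

section InfExpDecay

variable {X : Type*} [TopologicalSpace X] {A : Set X} {β K : X → ℝ}

noncomputable def infExpDecay (A : Set X) (β K : X → ℝ) (z : ℝ) : ℝ :=
  sInf ((fun x => exp (-β x * z) * K x) '' A)

theorem continuous_infExpDecay (hA : IsCompact A) (hβ : Continuous β) (hK : Continuous K) :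
    Continuous (infExpDecay A β K) :=
  hA.continuous_sInf (by fun_prop)

theorem infExpDecay_le (hA : IsCompact A) (hβ : Continuous β) (hK : Continuous K) {x : X}
    (hx : x ∈ A) (z : ℝ) : infExpDecay A β K z ≤ exp (-β x * z) * K x :=
  csInf_le (hA.image (by fun_prop)).bddBelow (mem_image_of_mem _ hx)

theorem exists_infExpDecay_eq (hA : IsCompact A) (hAne : A.Nonempty) (hβ : Continuous β)
    (hK : Continuous K) (z : ℝ) : ∃ x ∈ A, infExpDecay A β K z = exp (-β x * z) * K x := by
  obtain ⟨x, hx, heq, -⟩ :=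
    hA.exists_sInf_image_eq_and_le hAne (f := fun x => exp (-β x * z) * K x) (by fun_prop)
  exact ⟨x, hx, heq⟩

theorem infExpDecay_pos (hA : IsCompact A) (hAne : A.Nonempty) (hβ : Continuous β)
    (hK : Continuous K) (hKpos : ∀ x ∈ A, 0 < K x) (z : ℝ) : 0 < infExpDecay A β K z := by
  obtain ⟨x, hx, heq⟩ := exists_infExpDecay_eq hA hAne hβ hK z
  rw [heq]
  exact mul_pos (exp_pos _) (hKpos x hx)

theorem strictAnti_infExpDecay (hA : IsCompact A) (hAne : A.Nonempty) (hβ : Continuous β)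
    (hK : Continuous K) (hβpos : ∀ x ∈ A, 0 < β x) (hKpos : ∀ x ∈ A, 0 < K x) :
    StrictAnti (infExpDecay A β K) := by
  intro z₁ z₂ hz
  obtain ⟨x, hx, heq⟩ := exists_infExpDecay_eq hA hAne hβ hK z₁
  calc infExpDecay A β K z₂ ≤ exp (-β x * z₂) * K x := infExpDecay_le hA hβ hK hx z₂
    _ < exp (-β x * z₁) * K x :=
      mul_lt_mul_of_pos_right (exp_lt_exp.2 (by nlinarith [hβpos x hx])) (hKpos x hx)
    _ = infExpDecay A β K z₁ := heq.symm

theorem tendsto_infExpDecay_atTop (hA : IsCompact A) (hAne : A.Nonempty) (hβ : Continuous β)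
    (hK : Continuous K) (hβpos : ∀ x ∈ A, 0 < β x) (hKpos : ∀ x ∈ A, 0 < K x) :
    Tendsto (infExpDecay A β K) atTop (𝓝 0) := by
  obtain ⟨x, hx⟩ := hAne
  have hupper : Tendsto (fun z => exp (-β x * z) * K x) atTop (𝓝 0) := by
    simpa using (tendsto_exp_atBot.comp
      (tendsto_id.const_mul_atTop_of_neg (neg_lt_zero.2 (hβpos x hx)))).mul_const (K x)
  exact tendsto_of_tendsto_of_tendsto_of_le_of_le tendsto_const_nhds hupper
    (fun z => (infExpDecay_pos hA ⟨x, hx⟩ hβ hK hKpos z).le) (infExpDecay_le hA hβ hK hx)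

theorem tendsto_infExpDecay_atBot (hA : IsCompact A) (hAne : A.Nonempty) (hβ : Continuous β)
    (hK : Continuous K) (hβpos : ∀ x ∈ A, 0 < β x) (hKpos : ∀ x ∈ A, 0 < K x) :
    Tendsto (infExpDecay A β K) atBot atTop := by
  obtain ⟨xβ, hxβ, hβmin⟩ := hA.exists_isMinOn hAne hβ.continuousOn
  obtain ⟨xK, hxK, hKmin⟩ := hA.exists_isMinOn hAne hK.continuousOn
  have hlower : Tendsto (fun z => exp (-β xβ * z) * K xK) atBot atTop :=
    (tendsto_exp_atTop.comp (tendsto_id.const_mul_atBot_of_neg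
      (neg_lt_zero.2 (hβpos xβ hxβ)))).atTop_mul_const (hKpos xK hxK)
  refine tendsto_atTop_mono' _ ?_ hlower
  filter_upwards [eventually_le_atBot 0] with z hz
  obtain ⟨x, hx, heq⟩ := exists_infExpDecay_eq hA hAne hβ hK z
  rw [heq]
  have hβx : β xβ ≤ β x := hβmin hx
  exact mul_le_mul (exp_le_exp.2 (by nlinarith)) (hKmin hx) (hKpos xK hxK).le (exp_pos _).le

theorem existsUnique_infExpDecay_eq (hA : IsCompact A) (hAne : A.Nonempty) (hβ : Continuous β)
    (hK : Continuous K) (hβpos : ∀ x ∈ A, 0 < β x) (hKpos : ∀ x ∈ A, 0 < K x) {t : ℝ}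
    (ht : 0 < t) : ∃! z, infExpDecay A β K z = t := by
  have hbelow := (tendsto_infExpDecay_atTop hA hAne hβ hK hβpos hKpos).eventually
    (gt_mem_nhds ht)
  have habove := (tendsto_infExpDecay_atBot hA hAne hβ hK hβpos hKpos).eventually
    (eventually_ge_atTop t)
  obtain ⟨z, hz⟩ := mem_range_of_exists_le_of_exists_ge (continuous_infExpDecay hA hβ hK)
    (hbelow.exists.imp fun _ => le_of_lt) habove.exists
  exact ⟨z, hz, fun y hy =>
    (strictAnti_infExpDecay hA hAne hβ hK hβpos hKpos).injective (hy.trans hz.symm)⟩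

end InfExpDecay

theorem fderiv_apply_self_of_homogeneous {E : Type*} [NormedAddCommGroup E] [NormedSpace ℝ E]
    {G : E → ℝ} {Y : E} (hG : DifferentiableAt ℝ G Y)
    (hhom : ∀ t : ℝ, 0 < t → G (t • Y) = t * G Y) : fderiv ℝ G Y Y = G Y := by
  have hray : HasDerivAt (fun t : ℝ => G (t • Y)) (fderiv ℝ G Y Y) 1 :=
    hG.hasFDerivAt.comp_hasDerivAt_of_eq (1 : ℝ)
      (by simpa using (hasDerivAt_id (1 : ℝ)).smul_const Y) (by simp)
  have hlin : HasDerivAt (fun t : ℝ => t * G Y) (G Y) 1 := by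
    simpa using (hasDerivAt_id (1 : ℝ)).mul_const (G Y)
  have heq : (fun t : ℝ => G (t • Y)) =ᶠ[𝓝 1] fun t => t * G Y := by
    filter_upwards [lt_mem_nhds one_pos] with t ht using hhom t ht
  exact hray.unique (hlin.congr_of_eventuallyEq heq)

theorem pos_of_homogeneous_of_fderiv_single_pos {ι : Type*} [Fintype ι] [Nonempty ι]
    [DecidableEq ι] {G : (ι → ℝ) → ℝ} {Y : ι → ℝ} (hG : DifferentiableAt ℝ G Y)
    (hhom : ∀ t : ℝ, 0 < t → G (t • Y) = t * G Y) (hY : ∀ i, 0 < Y i)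
    (hd : ∀ i, 0 < fderiv ℝ G Y (Pi.single i 1)) : 0 < G Y := by
  have heuler : G Y = ∑ i, Y i * fderiv ℝ G Y (Pi.single i 1) := by
    rw [← fderiv_apply_self_of_homogeneous hG hhom]
    generalize fderiv ℝ G Y = L
    conv_lhs => rw [← Finset.univ_sum_single Y]
    simp only [map_sum]
    refine Finset.sum_congr rfl fun i _ => ?_
    rw [← smul_eq_mul, ← map_smul, ← Pi.single_smul', smul_eq_mul, mul_one]
  rw [heuler]
  exact Finset.sum_pos (fun i _ => mul_pos (hY i) (hd i)) Finset.univ_nonempty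

theorem forall_eq_div_one_add_sum_iff {ι 𝕜 : Type*} [Fintype ι] [Field 𝕜] {p w : ι → 𝕜}
    (hw : 1 + ∑ l, w l ≠ 0) (hp : ∑ l, p l ≠ 1) :
    (∀ n, p n = w n / (1 + ∑ l, w l)) ↔ ∀ n, w n = p n / (1 - ∑ l, p l) := by
  have hp' : 1 - ∑ l, p l ≠ 0 := sub_ne_zero.2 hp.symm
  constructor
  · intro h
    have hsum : ∑ l, p l = (∑ l, w l) / (1 + ∑ l, w l) := by
      rw [Finset.sum_div]; exact Finset.sum_congr rfl fun l _ => h l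
    intro n
    rw [hsum, h n]
    field_simp
    ring
  · intro h
    have hsum : ∑ l, w l = (∑ l, p l) / (1 - ∑ l, p l) := by
      rw [Finset.sum_div]; exact Finset.sum_congr rfl fun l _ => h l
    intro n
    rw [hsum, h n]
    field_simp
    ring

section Block

variable {ι : Type*}

theorem pos_of_contDiffOn_of_homogeneous [Fintype ι] [Nonempty ι] [DecidableEq ι]
    {G : (ι → ℝ) → ℝ}
    (hsm : ContDiffOn ℝ 2 G {Y : ι → ℝ | ∀ i, 0 < Y i})
    (hhom : ∀ t : ℝ, 0 < t → ∀ Y : ι → ℝ, (∀ i, 0 < Y i) → G (t • Y) = t * G Y)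
    (hd1 : ∀ Y : ι → ℝ, (∀ i, 0 < Y i) → ∀ i, 0 < fderiv ℝ G Y (Pi.single i 1))
    {Y : ι → ℝ} (hY : ∀ i, 0 < Y i) : 0 < G Y := by
  have hopen : IsOpen {Y : ι → ℝ | ∀ i, 0 < Y i} := by
    simpa [Set.pi] using isOpen_set_pi (Set.finite_univ (α := ι)) fun _ _ => isOpen_Ioi (a := 0)
  exact pos_of_homogeneous_of_fderiv_single_pos
    ((hsm.differentiableOn (by norm_num)).differentiableAt (hopen.mem_nhds hY))
    (fun t ht => hhom t ht Y hY) hY (hd1 Y hY)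

-- `ĝ_n` with the block `V_n` replaced by an arbitrary finite type: `ghatP … n` unfolds to it.
noncomputable def ghat (G : (ι → ℝ) → ℝ) (A : Set ((ι → ℝ) × (ι → ℝ))) (c : ι → ℝ)
    (z : ℝ) : ℝ :=
  sInf ((fun ab => G fun i => exp (ab.1 i - ab.2 i * (z + c i))) '' A)

theorem exp_affine_eq_smul {a b c : ι → ℝ} {β : ℝ} (hb : ∀ i, b i = β) (z : ℝ) :
    (fun i => exp (a i - b i * (z + c i))) = exp (-β * z) • fun i => exp (a i - b i * c i) := by
  funext i
  rw [Pi.smul_apply, smul_eq_mul, ← exp_add, hb i]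
  ring_nf

theorem ghat_eq_infExpDecay {G : (ι → ℝ) → ℝ}
    (hhom : ∀ t : ℝ, 0 < t → ∀ Y : ι → ℝ, (∀ i, 0 < Y i) → G (t • Y) = t * G Y)
    {A : Set ((ι → ℝ) × (ι → ℝ))} (hAb : ∀ ab ∈ A, ∃ β : ℝ, 0 < β ∧ ∀ i, ab.2 i = β)
    (c : ι → ℝ) (i₀ : ι) :
    ghat G A c = infExpDecay A (fun ab => ab.2 i₀)
      (fun ab => G fun i => exp (ab.1 i - ab.2 i * c i)) := by
  funext z
  refine congrArg sInf (Set.image_congr fun ab hab => ?_)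
  obtain ⟨β, -, hβ⟩ := hAb ab hab
  rw [exp_affine_eq_smul hβ, hhom _ (exp_pos _) _ fun i => exp_pos _]
  dsimp only
  rw [hβ i₀]

variable [Fintype ι] [Nonempty ι] [DecidableEq ι] {G : (ι → ℝ) → ℝ}
  {A : Set ((ι → ℝ) × (ι → ℝ))}

theorem ghat_pos (hsm : ContDiffOn ℝ 2 G {Y : ι → ℝ | ∀ i, 0 < Y i})
    (hhom : ∀ t : ℝ, 0 < t → ∀ Y : ι → ℝ, (∀ i, 0 < Y i) → G (t • Y) = t * G Y)
    (hd1 : ∀ Y : ι → ℝ, (∀ i, 0 < Y i) → ∀ i, 0 < fderiv ℝ G Y (Pi.single i 1))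
    (hAne : A.Nonempty) (hAcomp : IsCompact A)
    (hAb : ∀ ab ∈ A, ∃ β : ℝ, 0 < β ∧ ∀ i, ab.2 i = β) (c : ι → ℝ) (z : ℝ) :
    0 < ghat G A c z := by
  rw [ghat_eq_infExpDecay hhom hAb c (Classical.arbitrary ι)]
  exact infExpDecay_pos hAcomp hAne (by fun_prop)
    (hsm.continuousOn.comp_continuous (by fun_prop) fun _ _ => exp_pos _)
    (fun _ _ => pos_of_contDiffOn_of_homogeneous hsm hhom hd1 fun _ => exp_pos _) z

theorem existsUnique_ghat_eq (hsm : ContDiffOn ℝ 2 G {Y : ι → ℝ | ∀ i, 0 < Y i})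
    (hhom : ∀ t : ℝ, 0 < t → ∀ Y : ι → ℝ, (∀ i, 0 < Y i) → G (t • Y) = t * G Y)
    (hd1 : ∀ Y : ι → ℝ, (∀ i, 0 < Y i) → ∀ i, 0 < fderiv ℝ G Y (Pi.single i 1))
    (hAne : A.Nonempty) (hAcomp : IsCompact A)
    (hAb : ∀ ab ∈ A, ∃ β : ℝ, 0 < β ∧ ∀ i, ab.2 i = β) (c : ι → ℝ) {t : ℝ} (ht : 0 < t) :
    ∃! z, ghat G A c z = t := by
  rw [ghat_eq_infExpDecay hhom hAb c (Classical.arbitrary ι)]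
  refine existsUnique_infExpDecay_eq hAcomp hAne (by fun_prop)
    (hsm.continuousOn.comp_continuous (by fun_prop) fun _ _ => exp_pos _) (fun ab hab => ?_)
    (fun _ _ => pos_of_contDiffOn_of_homogeneous hsm hhom hd1 fun _ => exp_pos _) ht
  obtain ⟨β, hβpos, hβ⟩ := hAb ab hab
  exact (hβ _).symm ▸ hβpos

end Block

theorem stmt_5_general
    (m N : ℕ)
    (part : Fin m → Fin N) (hpart : ∀ n : Fin N, ∃ i, part i = n)
    (Gn : ∀ n : Fin N, ({i : Fin m // part i = n} → ℝ) → ℝ)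
    (hGsmooth : ∀ n, ContDiffOn ℝ 2 (Gn n)
      {Y : {i : Fin m // part i = n} → ℝ | ∀ i, 0 < Y i})
    (hGhom : ∀ n, ∀ lam : ℝ, 0 < lam → ∀ Y : {i : Fin m // part i = n} → ℝ,
      (∀ i, 0 < Y i) → Gn n (lam • Y) = lam * Gn n Y)
    (hGd1 : ∀ n, ∀ Y : {i : Fin m // part i = n} → ℝ, (∀ i, 0 < Y i) →
      ∀ i, 0 < fderiv ℝ (Gn n) Y (Pi.single i 1))
    (An : ∀ n : Fin N,
      Set (({i : Fin m // part i = n} → ℝ) × ({i : Fin m // part i = n} → ℝ)))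
    (hAne : ∀ n, (An n).Nonempty) (hAcomp : ∀ n, IsCompact (An n))
    (hAb : ∀ n, ∀ ab ∈ An n, ∃ β : ℝ, 0 < β ∧ ∀ i, ab.2 i = β)
    (c : Fin m → ℝ) :
    ∀ p : Fin N → ℝ, (∀ n, 0 < p n) → (∑ n, p n) < 1 →
      (∃! z : Fin N → ℝ, ∀ n, p n =
        ghatP m N part Gn c An n (z n) /
          (1 + ∑ l, ghatP m N part Gn c An l (z l))) ∧
      (∀ z : Fin N → ℝ,
        (∀ n, p n = ghatP m N part Gn c An n (z n) /
            (1 + ∑ l, ghatP m N part Gn c An l (z l))) ↔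
        (∀ n, ghatP m N part Gn c An n (z n) = p n / (1 - ∑ l, p l))) := by
  have hblock : ∀ n, Nonempty {i : Fin m // part i = n} :=
    fun n => (hpart n).elim fun i hi => ⟨⟨i, hi⟩⟩
  have hpos : ∀ n z, 0 < ghatP m N part Gn c An n z := fun n =>
    ghat_pos (hGsmooth n) (hGhom n) (hGd1 n) (hAne n) (hAcomp n) (hAb n) _
  have hunique : ∀ n t, 0 < t → ∃! z, ghatP m N part Gn c An n z = t := fun n _ ht =>
    existsUnique_ghat_eq (hGsmooth n) (hGhom n) (hGd1 n) (hAne n) (hAcomp n) (hAb n) _ ht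
  intro p hp hpsum
  have hchar : ∀ z : Fin N → ℝ,
      (∀ n, p n = ghatP m N part Gn c An n (z n) /
          (1 + ∑ l, ghatP m N part Gn c An l (z l))) ↔
        (∀ n, ghatP m N part Gn c An n (z n) = p n / (1 - ∑ l, p l)) := fun z =>
    forall_eq_div_one_add_sum_iff
      (by linarith [Finset.sum_nonneg fun l (_ : l ∈ Finset.univ) => (hpos l (z l)).le])
      hpsum.ne
  have htarget : ∀ n, 0 < p n / (1 - ∑ l, p l) := fun n => div_pos (hp n) (sub_pos.2 hpsum)
  choose z hz using fun n => (hunique n _ (htarget n)).exists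
  exact ⟨⟨z, (hchar z).2 hz, fun y hy =>
    funext fun n => (hunique n _ (htarget n)).unique ((hchar y).1 hy n) (hz n)⟩, hchar⟩

/-- For every `p` with positive entries summing to less than one,
there is a unique `z ∈ ℝ^N` with `p_n = ĝ_n(z_n)/(1 + Σ_l ĝ_l(z_l))` for all `n`;
this `z` is characterized by `ĝ_n(z_n) = p_n/(1 − Σ_l p_l)` for all `n`. -/
theorem stmt_5
    (m N : ℕ) (hN : 1 ≤ N)
    (part : Fin m → Fin N) (hpart : ∀ n : Fin N, ∃ i, part i = n)
    (Gn : ∀ n : Fin N, ({i : Fin m // part i = n} → ℝ) → ℝ)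
    (hGnonneg : ∀ n, ∀ Y : {i : Fin m // part i = n} → ℝ,
      (∀ i, 0 < Y i) → 0 ≤ Gn n Y)
    (hGsmooth : ∀ n, ContDiffOn ℝ 2 (Gn n)
      {Y : {i : Fin m // part i = n} → ℝ | ∀ i, 0 < Y i})
    (hGhom : ∀ n, ∀ lam : ℝ, 0 < lam → ∀ Y : {i : Fin m // part i = n} → ℝ,
      (∀ i, 0 < Y i) → Gn n (lam • Y) = lam * Gn n Y)
    (hGd1 : ∀ n, ∀ Y : {i : Fin m // part i = n} → ℝ, (∀ i, 0 < Y i) →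
      ∀ i, 0 < fderiv ℝ (Gn n) Y (Pi.single i 1))
    (hGd2 : ∀ n, ∀ Y : {i : Fin m // part i = n} → ℝ, (∀ i, 0 < Y i) →
      ∀ i j, i ≠ j →
        fderiv ℝ (fun W => fderiv ℝ (Gn n) W (Pi.single i 1)) Y (Pi.single j 1) ≤ 0)
    (An : ∀ n : Fin N,
      Set (({i : Fin m // part i = n} → ℝ) × ({i : Fin m // part i = n} → ℝ)))
    (hAne : ∀ n, (An n).Nonempty) (hAconv : ∀ n, Convex ℝ (An n))
    (hAcomp : ∀ n, IsCompact (An n))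
    (hAb : ∀ n, ∀ ab ∈ An n, ∃ β : ℝ, 0 < β ∧ ∀ i, ab.2 i = β)
    (c : Fin m → ℝ) (hc : ∀ i, 0 ≤ c i) :
    ∀ p : Fin N → ℝ, (∀ n, 0 < p n) → (∑ n, p n) < 1 →
      (∃! z : Fin N → ℝ, ∀ n, p n =
        ghatP m N part Gn c An n (z n) /
          (1 + ∑ l, ghatP m N part Gn c An l (z l))) ∧
      (∀ z : Fin N → ℝ,
        (∀ n, p n = ghatP m N part Gn c An n (z n) /
            (1 + ∑ l, ghatP m N part Gn c An l (z l))) ↔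
        (∀ n, ghatP m N part Gn c An n (z n) = p n / (1 - ∑ l, p l))) :=
  stmt_5_general m N part hpart Gn hGsmooth hGhom hGd1 An hAne hAcomp hAb c
end

section
/- The function Q : ℝ^N → ℝ defined by Q(z) = log(1 + Σ_{n=1}^N γ_n·exp(−β_n·z_n)) is strictly convex on ℝ^N. -/
/-!
Read `1 + Σ γₙ exp(−βₙ zₙ)` as a weighted sum `Σᵢ wᵢ exp(uᵢ(z))` over `Option (Fin N)`, with
`u(z) none = 0` and `u(z) (some n) = −βₙ zₙ` linear in `z`. After normalising both sums to `1`,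
strict convexity of `exp` shows that log-sum-exp is strictly convex along every direction
except the constant one. Since `u` vanishes on `none` and `βₙ > 0`, `u(x) − u(y)` is constant
only when `x = y`.
-/

open Real Finset

section LogSumExp

variable {ι : Type*} [Fintype ι] {a b : ℝ}

theorem sum_exp_convexComb_lt_one {P Q : ι → ℝ} (hP : ∑ i, exp (P i) = 1)
    (hQ : ∑ i, exp (Q i) = 1) (hPQ : P ≠ Q) (ha : 0 < a) (hb : 0 < b) (hab : a + b = 1) :
    ∑ i, exp (a * P i + b * Q i) < 1 := by
  obtain ⟨j, hj⟩ := Function.ne_iff.mp hPQ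
  calc ∑ i, exp (a * P i + b * Q i) < ∑ i, (a * exp (P i) + b * exp (Q i)) :=
        sum_lt_sum
          (fun i _ => convexOn_exp.2 (Set.mem_univ _) (Set.mem_univ _) ha.le hb.le hab)
          ⟨j, mem_univ j, strictConvexOn_exp.2 (Set.mem_univ _) (Set.mem_univ _) hj ha hb hab⟩
    _ = 1 := by rw [sum_add_distrib, ← mul_sum, ← mul_sum, hP, hQ, mul_one, mul_one, hab]

theorem log_sum_exp_convexComb_lt {u v : ι → ℝ} (huv : ∀ c, ∃ i, u i - v i ≠ c)
    (ha : 0 < a) (hb : 0 < b) (hab : a + b = 1) :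
    log (∑ i, exp (a * u i + b * v i)) <
      a * log (∑ i, exp (u i)) + b * log (∑ i, exp (v i)) := by
  obtain ⟨i₀, -⟩ := huv 0
  have hpos : ∀ w : ι → ℝ, 0 < ∑ i, exp (w i) := fun w =>
    sum_pos (fun i _ => exp_pos _) ⟨i₀, mem_univ _⟩
  set A := log (∑ i, exp (u i))
  set B := log (∑ i, exp (v i))
  have normalize : ∀ w : ι → ℝ, ∑ i, exp (w i - log (∑ i, exp (w i))) = 1 := fun w => by
    simp_rw [exp_sub, ← sum_div, exp_log (hpos w)]
    exact div_self (hpos w).ne'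
  have hne : (fun i => u i - A) ≠ (fun i => v i - B) := fun h => by
    obtain ⟨i, hi⟩ := huv (A - B)
    exact hi (by linarith [congrFun h i])
  have hlt := sum_exp_convexComb_lt_one (normalize u) (normalize v) hne ha hb hab
  have hsplit : ∑ i, exp (a * u i + b * v i) =
      exp (a * A + b * B) * ∑ i, exp (a * (u i - A) + b * (v i - B)) := by
    rw [mul_sum]
    refine sum_congr rfl fun i _ => ?_
    rw [← exp_add]
    ring_nf
  rw [hsplit, log_mul (exp_pos _).ne' (hpos _).ne', log_exp]
  linarith [log_neg (hpos _) hlt]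

theorem log_sum_mul_exp_convexComb_lt {w u v : ι → ℝ} (hw : ∀ i, 0 < w i)
    (huv : ∀ c, ∃ i, u i - v i ≠ c) (ha : 0 < a) (hb : 0 < b) (hab : a + b = 1) :
    log (∑ i, w i * exp (a * u i + b * v i)) <
      a * log (∑ i, w i * exp (u i)) + b * log (∑ i, w i * exp (v i)) := by
  have hexp : ∀ t i, w i * exp t = exp (log (w i) + t) := fun t i => by
    rw [exp_add, exp_log (hw i)]
  have hcomb : ∀ i, log (w i) + (a * u i + b * v i) =
      a * (log (w i) + u i) + b * (log (w i) + v i) := fun i => by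
    linear_combination log (w i) * hab.symm
  simp only [hexp, hcomb]
  exact log_sum_exp_convexComb_lt (fun c => by simpa using huv c) ha hb hab

end LogSumExp

theorem stmt_6_general
    (N : ℕ)
    (γ β : Fin N → ℝ) (hγ : ∀ n, 0 < γ n) (hβ : ∀ n, 0 < β n) :
    StrictConvexOn ℝ (Set.univ : Set (Fin N → ℝ))
      (fun z : Fin N → ℝ =>
        Real.log (1 + ∑ n, γ n * Real.exp (-(β n) * z n))) := by
  let w : Option (Fin N) → ℝ := fun i => i.elim 1 γ
  let u : (Fin N → ℝ) → Option (Fin N) → ℝ := fun z i => i.elim 0 fun n => -(β n) * z n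
  have hw : ∀ i, 0 < w i := by
    rintro (_ | n)
    exacts [one_pos, hγ n]
  have hQ : ∀ z, 1 + ∑ n, γ n * exp (-(β n) * z n) = ∑ i, w i * exp (u z i) := fun z => by
    simp [w, u, Fintype.sum_option]
  refine ⟨convex_univ, fun x _ y _ hxy a b ha hb hab => ?_⟩
  have hu : ∀ i, u (a • x + b • y) i = a * u x i + b * u y i := by
    rintro (_ | n) <;>
      simp only [u, Option.elim, Pi.add_apply, Pi.smul_apply, smul_eq_mul] <;> ring
  have huv : ∀ c, ∃ i, u x i - u y i ≠ c := by
    intro c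
    obtain rfl | hc := eq_or_ne c 0
    · obtain ⟨n, hn⟩ := Function.ne_iff.mp hxy
      refine ⟨some n, ?_⟩
      show -(β n) * x n - -(β n) * y n ≠ 0
      rw [← mul_sub]
      exact mul_ne_zero (neg_ne_zero.2 (hβ n).ne') (sub_ne_zero.2 hn)
    · exact ⟨none, by simpa [u] using hc.symm⟩
  simp only [hQ, hu, smul_eq_mul]
  exact log_sum_mul_exp_convexComb_lt hw huv ha hb hab

/-- For positive weights `γ` and positive rates `β`, the function
`Q(z) = log(1 + Σ_n γ_n exp(−β_n z_n))` is strictly convex on `ℝ^N`. -/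
theorem stmt_6
    (N : ℕ) (hN : 1 ≤ N)
    (γ β : Fin N → ℝ) (hγ : ∀ n, 0 < γ n) (hβ : ∀ n, 0 < β n) :
    StrictConvexOn ℝ (Set.univ : Set (Fin N → ℝ))
      (fun z : Fin N → ℝ =>
        Real.log (1 + ∑ n, γ n * Real.exp (-(β n) * z n))) :=
  stmt_6_general N γ β hγ hβ
end

section
/- The function W̃(p) = Σ_{n=1}^N (p_n/β_n)·log( γ_n·(1 − Σ_{l=1}^N p_l) / p_n ) is strictly concave on the open convex set {p ∈ ℝ^N : p_n > 0 for all n and Σ_{n=1}^N p_n < 1}. -/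
/-!
Write `S(p) = 1 - ∑ l, p l`. The `n`-th summand is `β n⁻¹ * P (p n, γ n * S(p))` for the
perspective `P (x, y) = x * log (y / x) = y * negMulLog (x / y)` of the strictly concave function
`negMulLog`, composed with the affine map `p ↦ (p n, γ n * S(p))`. A perspective is concave, and
strictly so between points whose ratios `x / y` differ. Two distinct points `p ≠ q` of the domain
cannot have `p n / S(p) = q n / S(q)` for every `n`, since summing these identities forces
`S(p) = S(q)`; so at least one summand is strictly concave along the segment from `p` to `q`.
-/

open Real Finset

section Perspective

variable {E : Type*} [AddCommGroup E] [Module ℝ E] {s : Set E} {φ : E → ℝ}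
  {b d t u : ℝ} {x y : E}

lemma perspective_weights_add (hB : t * b + u * d ≠ 0) :
    t * b / (t * b + u * d) + u * d / (t * b + u * d) = 1 := by
  rw [← add_div, div_self hB]

lemma perspective_weights_smul_add (hb : b ≠ 0) (hd : d ≠ 0) :
    (t * b / (t * b + u * d)) • (b⁻¹ • x) + (u * d / (t * b + u * d)) • (d⁻¹ • y) =
      (t * b + u * d)⁻¹ • (t • x + u • y) := by
  rw [smul_smul, smul_smul, smul_add, smul_smul, smul_smul]
  congr 2 <;> field_simp

lemma mul_perspective_weights_add (hB : t * b + u * d ≠ 0) (v w : ℝ) :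
    t * (b * v) + u * (d * w) =
      (t * b + u * d) * (t * b / (t * b + u * d) * v + u * d / (t * b + u * d) * w) := by
  field_simp

theorem ConcaveOn.perspective_add_le (hφ : ConcaveOn ℝ s φ) (hb : 0 < b) (hd : 0 < d)
    (ht : 0 < t) (hu : 0 < u) (hx : b⁻¹ • x ∈ s) (hy : d⁻¹ • y ∈ s) :
    t * (b * φ (b⁻¹ • x)) + u * (d * φ (d⁻¹ • y)) ≤
      (t * b + u * d) * φ ((t * b + u * d)⁻¹ • (t • x + u • y)) := by
  have hB : 0 < t * b + u * d := by positivity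
  have key := hφ.2 hx hy (by positivity) (by positivity) (perspective_weights_add hB.ne')
  rw [perspective_weights_smul_add hb.ne' hd.ne', smul_eq_mul, smul_eq_mul] at key
  rw [mul_perspective_weights_add hB.ne']
  exact mul_le_mul_of_nonneg_left key hB.le

theorem StrictConcaveOn.perspective_add_lt (hφ : StrictConcaveOn ℝ s φ) (hb : 0 < b)
    (hd : 0 < d) (ht : 0 < t) (hu : 0 < u) (hx : b⁻¹ • x ∈ s) (hy : d⁻¹ • y ∈ s)
    (hxy : b⁻¹ • x ≠ d⁻¹ • y) :
    t * (b * φ (b⁻¹ • x)) + u * (d * φ (d⁻¹ • y)) <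
      (t * b + u * d) * φ ((t * b + u * d)⁻¹ • (t • x + u • y)) := by
  have hB : 0 < t * b + u * d := by positivity
  have key := hφ.2 hx hy hxy (by positivity) (by positivity) (perspective_weights_add hB.ne')
  rw [perspective_weights_smul_add hb.ne' hd.ne', smul_eq_mul, smul_eq_mul] at key
  rw [mul_perspective_weights_add hB.ne']
  exact mul_lt_mul_of_pos_left key hB

end Perspective

lemma mul_log_div_eq_mul_negMulLog {x y : ℝ} (hx : 0 < x) (hy : 0 < y) :
    x * log (y / x) = y * negMulLog (y⁻¹ • x) := by
  rw [smul_eq_mul, negMulLog, log_mul (inv_ne_zero hy.ne') hx.ne', log_inv,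
    log_div hy.ne' hx.ne']
  field_simp
  ring

section MulLogDiv

variable {t u x₁ y₁ x₂ y₂ : ℝ}

lemma mul_log_div_add_le (ht : 0 < t) (hu : 0 < u) (hx₁ : 0 < x₁) (hy₁ : 0 < y₁)
    (hx₂ : 0 < x₂) (hy₂ : 0 < y₂) :
    t * (x₁ * log (y₁ / x₁)) + u * (x₂ * log (y₂ / x₂)) ≤
      (t * x₁ + u * x₂) * log ((t * y₁ + u * y₂) / (t * x₁ + u * x₂)) := by
  rw [mul_log_div_eq_mul_negMulLog hx₁ hy₁, mul_log_div_eq_mul_negMulLog hx₂ hy₂,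
    mul_log_div_eq_mul_negMulLog (by positivity) (by positivity)]
  exact concaveOn_negMulLog.perspective_add_le hy₁ hy₂ ht hu
    (by simp only [smul_eq_mul, Set.mem_Ici]; positivity)
    (by simp only [smul_eq_mul, Set.mem_Ici]; positivity)

lemma mul_log_div_add_lt (ht : 0 < t) (hu : 0 < u) (hx₁ : 0 < x₁) (hy₁ : 0 < y₁)
    (hx₂ : 0 < x₂) (hy₂ : 0 < y₂) (hne : x₁ * y₂ ≠ x₂ * y₁) :
    t * (x₁ * log (y₁ / x₁)) + u * (x₂ * log (y₂ / x₂)) <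
      (t * x₁ + u * x₂) * log ((t * y₁ + u * y₂) / (t * x₁ + u * x₂)) := by
  rw [mul_log_div_eq_mul_negMulLog hx₁ hy₁, mul_log_div_eq_mul_negMulLog hx₂ hy₂,
    mul_log_div_eq_mul_negMulLog (by positivity) (by positivity)]
  refine strictConcaveOn_negMulLog.perspective_add_lt hy₁ hy₂ ht hu
    (by simp only [smul_eq_mul, Set.mem_Ici]; positivity)
    (by simp only [smul_eq_mul, Set.mem_Ici]; positivity) ?_
  contrapose! hne
  simp only [smul_eq_mul] at hne
  field_simp at hne
  linarith

end MulLogDiv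

lemma convex_pos_sum_lt_one {ι : Type*} [Fintype ι] :
    Convex ℝ {p : ι → ℝ | (∀ i, 0 < p i) ∧ ∑ i, p i < 1} := by
  have hset : {p : ι → ℝ | (∀ i, 0 < p i) ∧ ∑ i, p i < 1} =
      (⋂ i, {p | 0 < p i}) ∩ {p | ∑ i, p i < 1} := by
    ext p
    simp
  rw [hset]
  exact (convex_iInter fun i => convex_halfSpace_gt (LinearMap.proj i).isLinear 0).inter
    (convex_halfSpace_lt (f := fun p : ι → ℝ => ∑ i, p i)
      ⟨fun p q => sum_add_distrib, fun c p => (mul_sum ..).symm⟩ 1)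

lemma exists_mul_one_sub_sum_ne {ι : Type*} [Fintype ι] {p q : ι → ℝ}
    (hq : ∑ i, q i ≠ 1) (hpq : p ≠ q) :
    ∃ i, p i * (1 - ∑ j, q j) ≠ q i * (1 - ∑ j, p j) := by
  by_contra! h
  have hsum : ∑ i, p i = ∑ i, q i := by
    have := sum_congr rfl fun i (_ : i ∈ univ) => h i
    rw [← sum_mul, ← sum_mul] at this
    linear_combination this
  refine hpq (funext fun i => mul_right_cancel₀ (sub_ne_zero.2 hq.symm) ?_)
  rw [h i, hsum]

theorem stmt_7_general
    (N : ℕ)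
    (γ β : Fin N → ℝ) (hγ : ∀ n, 0 < γ n) (hβ : ∀ n, 0 < β n) :
    StrictConcaveOn ℝ
      {p : Fin N → ℝ | (∀ n, 0 < p n) ∧ (∑ n, p n) < 1}
      (fun p : Fin N → ℝ =>
        ∑ n, (p n / β n) * Real.log (γ n * (1 - ∑ l, p l) / p n)) := by
  have hf : (fun p : Fin N → ℝ => ∑ n, (p n / β n) * log (γ n * (1 - ∑ l, p l) / p n)) =
      fun p => ∑ n, (β n)⁻¹ * (p n * log (γ n * (1 - ∑ l, p l) / p n)) :=
    funext fun p => sum_congr rfl fun n _ => by ring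
  rw [hf]
  refine ⟨convex_pos_sum_lt_one, fun p ⟨hp, hSp⟩ q ⟨hq, hSq⟩ hpq a b ha hb hab => ?_⟩
  obtain ⟨n₀, hn₀⟩ := exists_mul_one_sub_sum_ne hSq.ne hpq
  have hS : 1 - ∑ l, (a • p + b • q) l = a * (1 - ∑ l, p l) + b * (1 - ∑ l, q l) := by
    simp only [Pi.add_apply, Pi.smul_apply, smul_eq_mul, sum_add_distrib, ← mul_sum]
    linear_combination -hab
  beta_reduce
  rw [hS]
  set Sp := 1 - ∑ l, p l
  set Sq := 1 - ∑ l, q l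
  have hY (n : Fin N) : γ n * (a * Sp + b * Sq) = a * (γ n * Sp) + b * (γ n * Sq) := by ring
  have hpos (n : Fin N) : 0 < γ n * Sp ∧ 0 < γ n * Sq :=
    ⟨mul_pos (hγ n) (sub_pos.2 hSp), mul_pos (hγ n) (sub_pos.2 hSq)⟩
  simp only [smul_eq_mul, Pi.add_apply, Pi.smul_apply, mul_sum, ← sum_add_distrib, hY,
    mul_left_comm a (β _)⁻¹, mul_left_comm b (β _)⁻¹, ← mul_add]
  refine sum_lt_sum (fun n _ => ?_) ⟨n₀, mem_univ _, ?_⟩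
  · exact mul_le_mul_of_nonneg_left
      (mul_log_div_add_le ha hb (hp n) (hpos n).1 (hq n) (hpos n).2) (inv_pos.2 (hβ n)).le
  · refine mul_lt_mul_of_pos_left
      (mul_log_div_add_lt ha hb (hp n₀) (hpos n₀).1 (hq n₀) (hpos n₀).2 ?_)
      (inv_pos.2 (hβ n₀))
    contrapose! hn₀
    exact mul_left_cancel₀ (hγ n₀).ne' (by linear_combination hn₀)

/-- For positive weights `γ` and positive rates `β`, the function
`W̃(p) = Σ_n (p_n/β_n) · log(γ_n (1 − Σ_l p_l)/p_n)` is strictly concave on the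
open simplex `{p | ∀ n, p_n > 0, Σ_n p_n < 1}`. -/
theorem stmt_7
    (N : ℕ) (hN : 1 ≤ N)
    (γ β : Fin N → ℝ) (hγ : ∀ n, 0 < γ n) (hβ : ∀ n, 0 < β n) :
    StrictConcaveOn ℝ
      {p : Fin N → ℝ | (∀ n, 0 < p n) ∧ (∑ n, p n) < 1}
      (fun p : Fin N → ℝ =>
        ∑ n, (p n / β n) * Real.log (γ n * (1 - ∑ l, p l) / p n)) :=
  stmt_7_general N γ β hγ hβ
end

section
/- The function W has exactly one local maximizer z* on ℝ^N (so z* is also its unique global maximizer), and for each n there exists a minimizer (a^{n*}, b^{n*}) ∈ A^n of (a^n, b^n) ↦ G^n(Y^n|z*_n, a^n, b^n), with common price-sensitivity value β*_n > 0, such that z*_n = 1/β*_n + Σ_{l=1}^N ĝ_l(z*_l)/β*_l for every n = 1,…,N. -/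
/-- Reduced robust objective `W(z) = (Σ_n z_n ĝ_n(z_n)) / (1 + Σ_l ĝ_l(z_l))`. -/
noncomputable def WP (m N : ℕ) (part : Fin m → Fin N)
    (Gn : ∀ n : Fin N, ({i : Fin m // part i = n} → ℝ) → ℝ)
    (c : Fin m → ℝ)
    (An : ∀ n : Fin N,
      Set (({i : Fin m // part i = n} → ℝ) × ({i : Fin m // part i = n} → ℝ)))
    (z : Fin N → ℝ) : ℝ :=
  (∑ n, z n * ghatP m N part Gn c An n (z n)) /
    (1 + ∑ l, ghatP m N part Gn c An l (z l))

open Real Set Filter Topology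

def posOrthant (ι : Type*) : Set (ι → ℝ) := {Y | ∀ i, 0 < Y i}

lemma fderiv_apply_self_eq_of_eventually_smul {E F : Type*} [NormedAddCommGroup E]
    [NormedSpace ℝ E] [NormedAddCommGroup F] [NormedSpace ℝ F] {f : E → F} {x : E}
    {φ : ℝ → F} {c : F} (hf : DifferentiableAt ℝ f x) (hφ : HasDerivAt φ c 1)
    (hray : ∀ᶠ s in 𝓝 (1 : ℝ), f (s • x) = φ s) : fderiv ℝ f x x = c := by
  have hline : HasDerivAt (fun s : ℝ => s • x) x 1 := by
    simpa using (hasDerivAt_id (1 : ℝ)).smul_const x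
  have hcomp : HasDerivAt (fun s : ℝ => f (s • x)) (fderiv ℝ f x x) 1 :=
    hf.hasFDerivAt.comp_hasDerivAt_of_eq 1 hline (one_smul ℝ x).symm
  exact hcomp.unique (hφ.congr_of_eventuallyEq hray)

lemma ContinuousLinearMap.apply_eq_sum_smul_single {ι M : Type*} [Fintype ι] [DecidableEq ι]
    [AddCommGroup M] [Module ℝ M] [TopologicalSpace M]
    (L : (ι → ℝ) →L[ℝ] M) (u : ι → ℝ) : L u = ∑ i, u i • L (Pi.single i 1) := by
  conv_lhs => rw [← Finset.univ_sum_single u]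
  simp [map_sum, ← map_smul, ← Pi.single_smul']

lemma quadForm_nonneg_of_offDiag_nonpos {ι : Type*} [Fintype ι] {H : ι → ι → ℝ} {Y : ι → ℝ}
    (hY : ∀ i, 0 < Y i) (hsymm : ∀ i j, H i j = H j i) (hker : ∀ i, ∑ j, H i j * Y j = 0)
    (hoff : ∀ i j, i ≠ j → H i j ≤ 0) (w : ι → ℝ) : 0 ≤ ∑ i, ∑ j, H i j * w i * w j := by
  obtain ⟨a, hw⟩ : ∃ a : ι → ℝ, ∀ i, w i = a i * Y i :=
    ⟨fun i => w i / Y i, fun i => (div_mul_cancel₀ _ (hY i).ne').symm⟩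
  -- `2 wᵀHw = -∑ H i j Y i Y j (a i - a j)²`, using `H Y = 0` and symmetry
  have hexpand : ∀ i j, H i j * Y i * Y j * (a i - a j) ^ 2 =
      a i ^ 2 * Y i * (H i j * Y j) + a j ^ 2 * Y j * (H j i * Y i) - 2 * (H i j * w i * w j) := by
    intro i j; rw [hw i, hw j, hsymm j i]; ring
  have hrow : ∑ i, a i ^ 2 * Y i * ∑ j, H i j * Y j = 0 := by simp [hker]
  have hcol : ∑ i, ∑ j, a j ^ 2 * Y j * (H j i * Y i) = 0 := by
    rw [Finset.sum_comm]; simpa [← Finset.mul_sum] using hrow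
  have hterm : ∀ i j, H i j * Y i * Y j * (a i - a j) ^ 2 ≤ 0 := by
    intro i j
    rcases eq_or_ne i j with rfl | hij
    · simp
    · exact mul_nonpos_of_nonpos_of_nonneg
        (mul_nonpos_of_nonpos_of_nonneg (mul_nonpos_of_nonpos_of_nonneg (hoff i j hij)
          (hY i).le) (hY j).le) (sq_nonneg _)
  have hsum := Finset.sum_nonpos fun i (_ : i ∈ Finset.univ) =>
    Finset.sum_nonpos fun j (_ : j ∈ Finset.univ) => hterm i j
  simp only [hexpand, Finset.sum_add_distrib, Finset.sum_sub_distrib, hrow, hcol,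
    ← Finset.mul_sum] at hsum
  linarith

section Homogeneous

variable {ι : Type*}

lemma smul_mem_posOrthant {Y : ι → ℝ} (hY : Y ∈ posOrthant ι) {s : ℝ} (hs : 0 < s) :
    s • Y ∈ posOrthant ι := fun i => mul_pos hs (hY i)

variable [Fintype ι] {G : (ι → ℝ) → ℝ}

lemma isOpen_posOrthant : IsOpen (posOrthant ι) := by
  simp only [posOrthant, ofPred_forall]
  exact isOpen_iInter_of_finite fun i => isOpen_lt continuous_const (continuous_apply i)

variable (hG : ContDiffOn ℝ 2 G (posOrthant ι))
  (hhom : ∀ s : ℝ, 0 < s → ∀ Y : ι → ℝ, (∀ i, 0 < Y i) → G (s • Y) = s * G Y)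

include hG

lemma ContDiffOn.differentiableAt_of_mem_posOrthant {Y : ι → ℝ} (hY : Y ∈ posOrthant ι) :
    DifferentiableAt ℝ G Y :=
  (hG.contDiffAt (isOpen_posOrthant.mem_nhds hY)).differentiableAt (by norm_num)

lemma ContDiffOn.differentiableAt_fderiv_of_mem_posOrthant {Y : ι → ℝ} (hY : Y ∈ posOrthant ι) :
    DifferentiableAt ℝ (fderiv ℝ G) Y :=
  ((hG.contDiffAt (isOpen_posOrthant.mem_nhds hY)).fderiv_right (m := 1) (by norm_num))
    |>.differentiableAt (by norm_num)

lemma ContDiffOn.fderiv_fderiv_apply_eq {Y : ι → ℝ} (hY : Y ∈ posOrthant ι) (v u : ι → ℝ) :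
    fderiv ℝ (fun W => fderiv ℝ G W v) Y u = fderiv ℝ (fderiv ℝ G) Y u v := by
  rw [fderiv_clm_apply (hG.differentiableAt_fderiv_of_mem_posOrthant hY)
    (differentiableAt_const v)]
  simp

include hhom

lemma fderiv_apply_self_of_homogeneous_s9 {Y : ι → ℝ} (hY : Y ∈ posOrthant ι) :
    fderiv ℝ G Y Y = G Y :=
  fderiv_apply_self_eq_of_eventually_smul (hG.differentiableAt_of_mem_posOrthant hY)
    (by simpa using (hasDerivAt_id (1 : ℝ)).mul_const (G Y))
    (by filter_upwards [Ioi_mem_nhds one_pos] with s hs using hhom s hs Y hY)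

lemma fderiv_smul_of_homogeneous {Y : ι → ℝ} (hY : Y ∈ posOrthant ι) {s : ℝ} (hs : 0 < s) :
    fderiv ℝ G (s • Y) = fderiv ℝ G Y := by
  have hcomp : HasFDerivAt (fun W => G (s • W))
      ((fderiv ℝ G (s • Y)).comp (s • ContinuousLinearMap.id ℝ (ι → ℝ))) Y :=
    (hG.differentiableAt_of_mem_posOrthant (smul_mem_posOrthant hY hs)).hasFDerivAt.comp Y
      ((hasFDerivAt_id Y).const_smul s)
  have hscaled : HasFDerivAt (fun W => G (s • W)) (s • fderiv ℝ G Y) Y := by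
    refine ((hG.differentiableAt_of_mem_posOrthant hY).hasFDerivAt.const_smul s)
      |>.congr_of_eventuallyEq ?_
    filter_upwards [isOpen_posOrthant.mem_nhds hY] with W hW
    simp [hhom s hs W hW]
  ext v
  have hv := congrArg (fun L => L v) (hcomp.unique hscaled)
  simp only [ContinuousLinearMap.comp_apply, smul_apply,
    ContinuousLinearMap.id_apply, map_smul, smul_eq_mul] at hv
  exact mul_left_cancel₀ hs.ne' hv

lemma fderiv_fderiv_apply_self_of_homogeneous {Y : ι → ℝ} (hY : Y ∈ posOrthant ι) :
    fderiv ℝ (fderiv ℝ G) Y Y = 0 :=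
  fderiv_apply_self_eq_of_eventually_smul (hG.differentiableAt_fderiv_of_mem_posOrthant hY)
    (hasDerivAt_const 1 (fderiv ℝ G Y))
    (by filter_upwards [Ioi_mem_nhds one_pos] with s hs
        using fderiv_smul_of_homogeneous hG hhom hY hs)

lemma pos_of_homogeneous [Nonempty ι] [DecidableEq ι]
    (hd1 : ∀ Y : ι → ℝ, (∀ i, 0 < Y i) → ∀ i, 0 < fderiv ℝ G Y (Pi.single i 1))
    {Y : ι → ℝ} (hY : Y ∈ posOrthant ι) : 0 < G Y := by
  rw [← fderiv_apply_self_of_homogeneous_s9 hG hhom hY,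
    ContinuousLinearMap.apply_eq_sum_smul_single]
  exact Finset.sum_pos (fun i _ => mul_pos (hY i) (hd1 Y hY i)) Finset.univ_nonempty

end Homogeneous

section ConvexExp

variable {ι : Type*} [Fintype ι] [DecidableEq ι] {G : (ι → ℝ) → ℝ}
  (hG : ContDiffOn ℝ 2 G (posOrthant ι))
  (hhom : ∀ s : ℝ, 0 < s → ∀ Y : ι → ℝ, (∀ i, 0 < Y i) → G (s • Y) = s * G Y)
  (hd1 : ∀ Y : ι → ℝ, (∀ i, 0 < Y i) → ∀ i, 0 ≤ fderiv ℝ G Y (Pi.single i 1))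
  (hd2 : ∀ Y : ι → ℝ, (∀ i, 0 < Y i) → ∀ i j, i ≠ j →
    fderiv ℝ (fun W => fderiv ℝ G W (Pi.single i 1)) Y (Pi.single j 1) ≤ 0)

include hG hhom hd2 in
lemma fderiv_fderiv_apply_diag_nonneg {Y : ι → ℝ} (hY : Y ∈ posOrthant ι) (u : ι → ℝ) :
    0 ≤ fderiv ℝ (fderiv ℝ G) Y u u := by
  set H : ι → ι → ℝ := fun i j => fderiv ℝ (fderiv ℝ G) Y (Pi.single i 1) (Pi.single j 1)
  have hsymm : IsSymmSndFDerivAt ℝ G Y :=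
    (hG.contDiffAt (isOpen_posOrthant.mem_nhds hY)).isSymmSndFDerivAt (by simp)
  have hker : ∀ i, ∑ j, H i j * Y j = 0 := by
    intro i
    simp only [H, mul_comm _ (Y _), ← smul_eq_mul, ← ContinuousLinearMap.apply_eq_sum_smul_single,
      hsymm _ Y, fderiv_fderiv_apply_self_of_homogeneous hG hhom hY, zero_apply]
  have hquad : fderiv ℝ (fderiv ℝ G) Y u u = ∑ i, ∑ j, H i j * u i * u j := by
    rw [ContinuousLinearMap.apply_eq_sum_smul_single (fderiv ℝ (fderiv ℝ G) Y) u]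
    simp only [sum_apply, smul_apply, smul_eq_mul]
    refine Finset.sum_congr rfl fun i _ => ?_
    rw [ContinuousLinearMap.apply_eq_sum_smul_single _ u, Finset.mul_sum]
    exact Finset.sum_congr rfl fun j _ => by simp only [H, smul_eq_mul]; ring
  rw [hquad]
  refine quadForm_nonneg_of_offDiag_nonpos hY (fun i j => hsymm _ _) hker (fun i j hij => ?_) u
  simpa only [H, hG.fderiv_fderiv_apply_eq hY] using hd2 Y hY j i hij.symm

include hG hhom hd1 hd2 in
lemma convexOn_comp_exp_line (x v : ι → ℝ) :
    ConvexOn ℝ univ (fun t : ℝ => G (fun i => exp (x i + t * v i))) := by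
  set Y : ℝ → ι → ℝ := fun t i => exp (x i + t * v i)
  have hYpos : ∀ t, Y t ∈ posOrthant ι := fun t i => exp_pos _
  have hY : ∀ t, HasDerivAt Y (Y t * v) t := by
    intro t
    refine hasDerivAt_pi.2 fun i => ?_
    simpa [Y, mul_comm] using (((hasDerivAt_id t).mul_const (v i)).const_add (x i)).exp
  have hq : ∀ t, HasDerivAt (fun t => G (Y t)) (fderiv ℝ G (Y t) (Y t * v)) t := fun t =>
    (hG.differentiableAt_of_mem_posOrthant (hYpos t)).hasFDerivAt.comp_hasDerivAt t (hY t)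
  have hq' : ∀ t, HasDerivAt (fun t => fderiv ℝ G (Y t) (Y t * v))
      (fderiv ℝ (fderiv ℝ G) (Y t) (Y t * v) (Y t * v) + fderiv ℝ G (Y t) (Y t * v * v)) t :=
    fun t => ((hG.differentiableAt_fderiv_of_mem_posOrthant (hYpos t)).hasFDerivAt.comp_hasDerivAt
      t (hY t)).clm_apply ((hY t).mul_const v)
  refine convexOn_of_hasDerivWithinAt2_nonneg convex_univ
    (fun t _ => (hq t).continuousAt.continuousWithinAt)
    (fun t _ => (hq t).hasDerivWithinAt) (fun t _ => (hq' t).hasDerivWithinAt) fun t _ => ?_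
  refine add_nonneg (fderiv_fderiv_apply_diag_nonneg hG hhom hd2 (hYpos t) _) ?_
  rw [ContinuousLinearMap.apply_eq_sum_smul_single]
  refine Finset.sum_nonneg fun i _ => mul_nonneg ?_ (hd1 _ (hYpos t) i)
  simpa [mul_assoc] using mul_nonneg (hYpos t i).le (mul_self_nonneg (v i))

include hG hhom hd1 hd2 in
lemma convexOn_comp_exp : ConvexOn ℝ univ (fun x : ι → ℝ => G (fun i => exp (x i))) := by
  refine ⟨convex_univ, fun x _ y _ a b ha hb hab => ?_⟩
  have hline := (convexOn_comp_exp_line hG hhom hd1 hd2 x (y - x)).2 (mem_univ 0) (mem_univ 1)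
    ha hb hab
  have hb' : a = 1 - b := by linarith
  subst hb'
  convert hline using 3 <;> simp
  ring

end ConvexExp

section LowerEnvelope

variable {X : Type*} {A : Set X} {k β : X → ℝ}

noncomputable def lowerEnvelope (A : Set X) (k β : X → ℝ) (z : ℝ) : ℝ :=
  sInf ((fun x => k x - β x * z) '' A)

def activeSet (A : Set X) (k β : X → ℝ) (z : ℝ) : Set X :=
  {x ∈ A | ∀ y ∈ A, k x - β x * z ≤ k y - β y * z}

lemma lowerEnvelope_eq_of_mem_activeSet {z : ℝ} {x : X} (hx : x ∈ activeSet A k β z) :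
    lowerEnvelope A k β z = k x - β x * z :=
  IsLeast.csInf_eq ⟨mem_image_of_mem _ hx.1, forall_mem_image.2 hx.2⟩

lemma le_of_mem_activeSet {z z' : ℝ} (hzz' : z < z') {x x' : X} (hx : x ∈ activeSet A k β z)
    (hx' : x' ∈ activeSet A k β z') : β x ≤ β x' := by
  have h := hx.2 x' hx'.1
  have h' := hx'.2 x hx.1
  nlinarith

lemma isLeast_image_of_mem_activeSet {f : X → ℝ} {z : ℝ}
    (hf : ∀ x ∈ A, f x = exp (k x - β x * z)) {x : X} (hx : x ∈ activeSet A k β z) :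
    IsLeast (f '' A) (exp (lowerEnvelope A k β z)) := by
  rw [lowerEnvelope_eq_of_mem_activeSet hx, ← hf x hx.1]
  refine ⟨mem_image_of_mem f hx.1, forall_mem_image.2 fun y hy => ?_⟩
  rw [hf x hx.1, hf y hy]
  exact exp_le_exp.2 (hx.2 y hy)

lemma activeSet_eq_setOf_le {f : X → ℝ} {z : ℝ} (hf : ∀ x ∈ A, f x = exp (k x - β x * z))
    {x₀ : X} (hx₀ : x₀ ∈ activeSet A k β z) :
    activeSet A k β z = {x ∈ A | f x ≤ exp (lowerEnvelope A k β z)} := by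
  ext x
  refine ⟨fun hx => ⟨hx.1, by rw [hf x hx.1, lowerEnvelope_eq_of_mem_activeSet hx]⟩,
    fun hx => ⟨hx.1, fun y hy => ?_⟩⟩
  have hle := hx.2
  rw [hf x hx.1, exp_le_exp, lowerEnvelope_eq_of_mem_activeSet hx₀] at hle
  linarith [hx₀.2 y hy]

lemma lowerEnvelope_neg_neg (z : ℝ) : lowerEnvelope A k (-β) (-z) = lowerEnvelope A k β z := by
  simp [lowerEnvelope]

lemma activeSet_neg_neg (z : ℝ) : activeSet A k (-β) (-z) = activeSet A k β z := by
  simp [activeSet]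

variable [TopologicalSpace X] (hA : IsCompact A) (hk : Continuous k) (hβ : Continuous β)
include hA hk hβ

lemma activeSet_nonempty (hAne : A.Nonempty) (z : ℝ) : (activeSet A k β z).Nonempty := by
  obtain ⟨x, hx, hmin⟩ := hA.exists_isMinOn hAne (by fun_prop : Continuous fun x =>
    k x - β x * z).continuousOn
  exact ⟨x, hx, fun y hy => hmin hy⟩

lemma lowerEnvelope_le {x : X} (hx : x ∈ A) (z : ℝ) : lowerEnvelope A k β z ≤ k x - β x * z := by
  obtain ⟨y, hy⟩ := activeSet_nonempty hA hk hβ ⟨x, hx⟩ z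
  exact (lowerEnvelope_eq_of_mem_activeSet hy).le.trans (hy.2 x hx)

lemma isCompact_activeSet (z : ℝ) : IsCompact (activeSet A k β z) := by
  have hset : activeSet A k β z = A ∩ ⋂ y ∈ A, {x | k x - β x * z ≤ k y - β y * z} := by
    ext x; simp [activeSet]
  rw [hset]
  exact hA.inter_right (isClosed_biInter fun y _ => isClosed_le (by fun_prop) continuous_const)

lemma eventually_lowerEnvelope_ge {z : ℝ} {x₀ : X} (hx₀ : x₀ ∈ activeSet A k β z)
    (hmax : IsMaxOn β (activeSet A k β z) x₀) {ε : ℝ} (hε : 0 < ε) :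
    ∀ᶠ t in 𝓝[≥] z, lowerEnvelope A k β z - (β x₀ + ε) * (t - z) ≤ lowerEnvelope A k β t := by
  set h := lowerEnvelope A k β
  have hz : h z = k x₀ - β x₀ * z := lowerEnvelope_eq_of_mem_activeSet hx₀
  obtain ⟨B, hB⟩ := (hA.image hβ).bddAbove
  -- points of slope `≥ β x₀ + ε` are not active, so on that compact set the values at `z`
  -- stay above the minimum `h z` by a margin
  obtain ⟨a, hza, hfar⟩ : ∃ a, h z < a ∧ ∀ x ∈ A ∩ {x | β x₀ + ε ≤ β x}, a ≤ k x - β x * z := by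
    refine (hA.inter_right (isClosed_le continuous_const hβ)).exists_forall_le'
      (by fun_prop : Continuous fun x => k x - β x * z).continuousOn fun x hx => ?_
    refine lt_of_le_of_ne (hz ▸ hx₀.2 x hx.1) fun heq => ?_
    have hact : x ∈ activeSet A k β z := ⟨hx.1, fun y hy => by linarith [hx₀.2 y hy]⟩
    have hfar : β x₀ + ε ≤ β x := hx.2
    have hle : β x ≤ β x₀ := hmax hact
    linarith
  have hsmall : ∀ᶠ t in 𝓝 z, (B - β x₀ - ε) * (t - z) < a - h z :=
    (by fun_prop : Continuous fun t => (B - β x₀ - ε) * (t - z)).continuousAt.eventually_lt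
      continuousAt_const (by simpa using hza)
  filter_upwards [nhdsWithin_le_nhds hsmall, self_mem_nhdsWithin] with t ht (hzt : z ≤ t)
  obtain ⟨x, hx⟩ := activeSet_nonempty hA hk hβ ⟨x₀, hx₀.1⟩ t
  have hxt : h t = k x - β x * t := lowerEnvelope_eq_of_mem_activeSet hx
  rw [hxt]
  have hxB : β x ≤ B := hB (mem_image_of_mem β hx.1)
  have hxz : h z ≤ k x - β x * z := hz ▸ hx₀.2 x hx.1
  rcases lt_or_ge (β x) (β x₀ + ε) with hlt | hge
  · nlinarith
  · nlinarith [hfar x ⟨hx.1, hge⟩]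

lemma hasDerivWithinAt_lowerEnvelope_Ici {z : ℝ} {x₀ : X} (hx₀ : x₀ ∈ activeSet A k β z)
    (hmax : IsMaxOn β (activeSet A k β z) x₀) :
    HasDerivWithinAt (lowerEnvelope A k β) (-β x₀) (Ici z) z := by
  rw [hasDerivWithinAt_iff_isLittleO, Asymptotics.isLittleO_iff]
  intro ε hε
  filter_upwards [eventually_lowerEnvelope_ge hA hk hβ hx₀ hmax hε, self_mem_nhdsWithin]
    with t hlow (hzt : z ≤ t)
  have hup : lowerEnvelope A k β t ≤ lowerEnvelope A k β z - β x₀ * (t - z) := by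
    rw [lowerEnvelope_eq_of_mem_activeSet hx₀]
    linarith [lowerEnvelope_le hA hk hβ hx₀.1 t]
  rw [Real.norm_eq_abs, Real.norm_eq_abs, abs_of_nonneg (sub_nonneg.2 hzt), abs_le, smul_eq_mul]
  constructor <;> nlinarith

lemma hasDerivWithinAt_lowerEnvelope_Iic {z : ℝ} {x₁ : X} (hx₁ : x₁ ∈ activeSet A k β z)
    (hmin : IsMinOn β (activeSet A k β z) x₁) :
    HasDerivWithinAt (lowerEnvelope A k β) (-β x₁) (Iic z) z := by
  have hreflected := hasDerivWithinAt_lowerEnvelope_Ici hA hk hβ.neg (z := -z) (x₀ := x₁)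
    (by rwa [activeSet_neg_neg]) (by rw [activeSet_neg_neg]; exact hmin.neg)
  have := hreflected.comp z (hasDerivWithinAt_neg z (Iic z)) fun t (ht : t ≤ z) => neg_le_neg ht
  simpa [Function.comp_def, lowerEnvelope_neg_neg] using this

end LowerEnvelope

lemma IsLocalMax.hasDerivWithinAt_Ici_nonpos {f : ℝ → ℝ} {a d : ℝ} (h : IsLocalMax f a)
    (hf : HasDerivWithinAt f d (Ici a) a) : d ≤ 0 := by
  have hcone : (1 : ℝ) ∈ posTangentConeAt (Ici a) a :=
    mem_posTangentConeAt_of_segment_subset (by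
      rw [segment_eq_Icc (by linarith)]; exact Icc_subset_Ici_self)
  simpa using (h.on (Ici a)).hasFDerivWithinAt_nonpos hf.hasFDerivWithinAt hcone

lemma IsLocalMax.hasDerivWithinAt_Iic_nonneg {f : ℝ → ℝ} {a d : ℝ} (h : IsLocalMax f a)
    (hf : HasDerivWithinAt f d (Iic a) a) : 0 ≤ d := by
  have hcone : (-1 : ℝ) ∈ posTangentConeAt (Iic a) a :=
    mem_posTangentConeAt_of_segment_subset (by
      rw [segment_symm, segment_eq_Icc (by linarith)]; exact Icc_subset_Iic_self)
  simpa using (h.on (Iic a)).hasFDerivWithinAt_nonpos hf.hasFDerivWithinAt hcone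

section LocalMax

variable {X : Type*} [TopologicalSpace X] {A : Set X} {k β : X → ℝ}
  (hA : IsCompact A) (hAne : A.Nonempty) (hk : Continuous k) (hβ : Continuous β)
include hA hAne hk hβ

lemma continuous_lowerEnvelope : Continuous (lowerEnvelope A k β) := by
  refine continuous_iff_continuousAt.2 fun z => continuousAt_iff_continuous_left_right.2 ⟨?_, ?_⟩
  · obtain ⟨x, hx, hmin⟩ := (isCompact_activeSet hA hk hβ z).exists_isMinOn
      (activeSet_nonempty hA hk hβ hAne z) hβ.continuousOn
    exact (hasDerivWithinAt_lowerEnvelope_Iic hA hk hβ hx hmin).continuousWithinAt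
  · obtain ⟨x, hx, hmax⟩ := (isCompact_activeSet hA hk hβ z).exists_isMaxOn
      (activeSet_nonempty hA hk hβ hAne z) hβ.continuousOn
    exact (hasDerivWithinAt_lowerEnvelope_Ici hA hk hβ hx hmax).continuousWithinAt

lemma lowerEnvelope_le_sub_mul {b : ℝ} (hb : ∀ x ∈ A, b ≤ β x) {s t : ℝ} (hst : s ≤ t) :
    lowerEnvelope A k β t ≤ lowerEnvelope A k β s - b * (t - s) := by
  obtain ⟨x, hx⟩ := activeSet_nonempty hA hk hβ hAne s
  rw [lowerEnvelope_eq_of_mem_activeSet hx]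
  nlinarith [lowerEnvelope_le hA hk hβ hx.1 t, hb x hx.1]

lemma exists_mem_activeSet_mul_sub_eq_one {w t₀ : ℝ}
    (hconv : (β '' activeSet A k β t₀).OrdConnected)
    (hmax : IsLocalMax (fun t => exp (lowerEnvelope A k β t) * (t - w)) t₀) :
    ∃ x ∈ activeSet A k β t₀, β x * (t₀ - w) = 1 := by
  have hcomp := isCompact_activeSet hA hk hβ t₀
  have hne := activeSet_nonempty hA hk hβ hAne t₀
  obtain ⟨x₀, hx₀, hx₀max⟩ := hcomp.exists_isMaxOn hne hβ.continuousOn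
  obtain ⟨x₁, hx₁, hx₁min⟩ := hcomp.exists_isMinOn hne hβ.continuousOn
  have hslope : ∀ {s : Set ℝ} {x : X}, HasDerivWithinAt (lowerEnvelope A k β) (-β x) s t₀ →
      HasDerivWithinAt (fun t => exp (lowerEnvelope A k β t) * (t - w))
        (exp (lowerEnvelope A k β t₀) * (1 - β x * (t₀ - w))) s t₀ := fun h =>
    (h.exp.mul ((hasDerivWithinAt_id t₀ _).sub_const w)).congr_deriv (by simp; ring)
  have hright := hmax.hasDerivWithinAt_Ici_nonpos
    (hslope (hasDerivWithinAt_lowerEnvelope_Ici hA hk hβ hx₀ hx₀max))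
  have hleft := hmax.hasDerivWithinAt_Iic_nonneg
    (hslope (hasDerivWithinAt_lowerEnvelope_Iic hA hk hβ hx₁ hx₁min))
  have h₀ : 1 ≤ β x₀ * (t₀ - w) := by nlinarith [exp_pos (lowerEnvelope A k β t₀)]
  have h₁ : β x₁ * (t₀ - w) ≤ 1 := by nlinarith [exp_pos (lowerEnvelope A k β t₀)]
  have h₁₀ : β x₁ ≤ β x₀ := hx₁min hx₀
  have hd : t₀ - w ≠ 0 := by rintro hd; simp [hd] at h₀; linarith
  have hinv : (t₀ - w) * (t₀ - w)⁻¹ = 1 := mul_inv_cancel₀ hd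
  have hmem : (t₀ - w)⁻¹ ∈ Icc (β x₁) (β x₀) := by
    rcases hd.lt_or_gt with hneg | hpos <;> constructor <;> nlinarith
  obtain ⟨x, hx, hβx⟩ := hconv.out (mem_image_of_mem β hx₁) (mem_image_of_mem β hx₀) hmem
  exact ⟨x, hx, by rw [hβx, inv_mul_cancel₀ hd]⟩

lemma eq_of_isLocalMax_exp_lowerEnvelope (hβpos : ∀ x ∈ A, 0 < β x)
    (hconv : ∀ t, (β '' activeSet A k β t).OrdConnected) {w t₀ t₁ : ℝ}
    (h₀ : IsLocalMax (fun t => exp (lowerEnvelope A k β t) * (t - w)) t₀)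
    (h₁ : IsLocalMax (fun t => exp (lowerEnvelope A k β t) * (t - w)) t₁) : t₀ = t₁ := by
  -- the slope `1 / (t - w)` picked out at a local maximum decreases in `t`, active slopes increase
  have key : ∀ {s t}, IsLocalMax (fun t => exp (lowerEnvelope A k β t) * (t - w)) s →
      IsLocalMax (fun t => exp (lowerEnvelope A k β t) * (t - w)) t → ¬ s < t := by
    intro s t hs ht hst
    obtain ⟨x, hx, hxs⟩ := exists_mem_activeSet_mul_sub_eq_one hA hAne hk hβ (hconv s) hs
    obtain ⟨y, hy, hyt⟩ := exists_mem_activeSet_mul_sub_eq_one hA hAne hk hβ (hconv t) ht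
    have hxy : β x ≤ β y := le_of_mem_activeSet hst hx hy
    have hx0 := hβpos x hx.1
    have hsw : 0 < s - w := by nlinarith
    nlinarith [hβpos y hy.1]
  rcases lt_trichotomy t₀ t₁ with h | h | h
  exacts [(key h₀ h₁ h).elim, h, (key h₁ h₀ h).elim]

end LocalMax

section Decay

variable {g : ℝ → ℝ} (hpos : ∀ t, 0 < g t) {b : ℝ} (hb : 0 < b)
  (hdecay : ∀ s t, s ≤ t → g t ≤ exp (-b * (t - s)) * g s)
include hpos hb hdecay

lemma antitone_of_decay : Antitone g := fun s t hst => by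
  have : exp (-b * (t - s)) ≤ 1 := exp_le_one_iff.2 (by nlinarith)
  nlinarith [hdecay s t hst, hpos s]

lemma monotoneOn_mul_sub (w : ℝ) : MonotoneOn (fun t => g t * (t - w)) (Iic w) :=
  fun s (hs : s ≤ w) t _ hst => by
    nlinarith [antitone_of_decay hpos hb hdecay hst, hpos t]

lemma mul_sub_le_mul_sub_of_le {w T t : ℝ} (hT : 1 ≤ b * (T - w)) (ht : T ≤ t) :
    g t * (t - w) ≤ g T * (T - w) := by
  have hTw : 0 ≤ T - w := by nlinarith
  -- `(s + a) e^{-b s} ≤ a` for `s ≥ 0` once `a b ≥ 1`, since `e^{b s} ≥ 1 + b s`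
  have hgrow : t - w ≤ (T - w) * exp (b * (t - T)) := by
    nlinarith [mul_le_mul_of_nonneg_left (add_one_le_exp (b * (t - T))) hTw,
      mul_nonneg (sub_nonneg.2 ht) (sub_nonneg.2 hT)]
  have hexp : (t - w) * exp (-b * (t - T)) ≤ T - w := by
    calc (t - w) * exp (-b * (t - T))
        ≤ (T - w) * exp (b * (t - T)) * exp (-b * (t - T)) :=
          mul_le_mul_of_nonneg_right hgrow (exp_pos _).le
      _ = T - w := by rw [mul_assoc, ← exp_add]; simp
  calc g t * (t - w) ≤ exp (-b * (t - T)) * g T * (t - w) :=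
        mul_le_mul_of_nonneg_right (hdecay T t ht) (by linarith)
    _ ≤ g T * (T - w) := by nlinarith [hpos T]

lemma exists_forall_mul_sub_le (hcont : Continuous g) (w : ℝ) :
    ∃ t₀, ∀ t, g t * (t - w) ≤ g t₀ * (t₀ - w) := by
  have hwb : w ≤ w + b⁻¹ := by have := inv_pos.2 hb; linarith
  obtain ⟨t₀, -, hmax⟩ := isCompact_Icc.exists_isMaxOn (nonempty_Icc.2 hwb)
    (by fun_prop : Continuous fun t => g t * (t - w)).continuousOn
  refine ⟨t₀, fun t => ?_⟩
  rcases le_or_gt t w with htw | htw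
  · exact (monotoneOn_mul_sub hpos hb hdecay w htw self_mem_Iic htw).trans
      (hmax ⟨le_rfl, hwb⟩)
  rcases le_or_gt t (w + b⁻¹) with htb | htb
  · exact hmax ⟨htw.le, htb⟩
  · exact (mul_sub_le_mul_sub_of_le hpos hb hdecay (by rw [add_sub_cancel_left, mul_inv_cancel₀ hb.ne']) htb.le).trans
      (hmax ⟨hwb, le_rfl⟩)

lemma mul_sub_le_mul_sub_max_min {w T : ℝ} (hw : 0 ≤ w) (hT : 1 ≤ b * (T - w)) (t : ℝ) :
    g t * (t - w) ≤ g (max 0 (min t T)) * (max 0 (min t T) - w) := by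
  have hT0 : 0 ≤ T := by nlinarith
  rcases lt_or_ge t 0 with h0 | h0
  · rw [max_eq_left (by simp [h0.le])]
    exact monotoneOn_mul_sub hpos hb hdecay w (h0.le.trans hw) hw h0.le
  rcases le_or_gt t T with htT | htT
  · rw [min_eq_left htT, max_eq_right h0]
  · rw [min_eq_right htT.le, max_eq_right hT0]
    exact mul_sub_le_mul_sub_of_le hpos hb hdecay hT htT.le

lemma mul_le_div_of_decay (t : ℝ) : t * g t ≤ g 0 / b := by
  rcases le_or_gt t 0 with ht | ht
  · nlinarith [hpos t, div_pos (hpos 0) hb]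
  · have := mul_sub_le_mul_sub_of_le hpos hb hdecay (w := -b⁻¹)
      (by rw [zero_sub, neg_neg, mul_inv_cancel₀ hb.ne']) ht.le
    rw [div_eq_mul_inv]
    nlinarith [hpos t, inv_pos.2 hb]

end Decay

section MNL

variable {ι : Type*} [Fintype ι]

noncomputable def mnlRevenue (g : ι → ℝ → ℝ) (z : ι → ℝ) : ℝ :=
  (∑ n, z n * g n (z n)) / (1 + ∑ n, g n (z n))

lemma sum_apply_update_sub_sum [DecidableEq ι] (F : ι → ℝ → ℝ) (z : ι → ℝ) (n : ι) (t : ℝ) :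
    ∑ l, F l (Function.update z n t l) - ∑ l, F l (z l) = F n t - F n (z n) := by
  rw [← Finset.add_sum_erase _ _ (Finset.mem_univ n),
    ← Finset.add_sum_erase _ _ (Finset.mem_univ n),
    Function.update_self, Finset.sum_congr rfl fun l hl => by
      rw [Function.update_of_ne (Finset.ne_of_mem_erase hl)]]
  ring

variable {g : ι → ℝ → ℝ} (hpos : ∀ n t, 0 < g n t)
include hpos

lemma one_add_sum_pos (z : ι → ℝ) : 0 < 1 + ∑ n, g n (z n) := by
  have := Finset.sum_nonneg fun n (_ : n ∈ Finset.univ) => (hpos n (z n)).le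
  linarith

lemma mnlRevenue_sub_mul (z : ι → ℝ) (w : ℝ) :
    (mnlRevenue g z - w) * (1 + ∑ n, g n (z n)) = ∑ n, g n (z n) * (z n - w) - w := by
  rw [mnlRevenue, sub_mul, div_mul_cancel₀ _ (one_add_sum_pos hpos z).ne']
  rw [Finset.sum_congr rfl fun n _ =>
    (by ring : g n (z n) * (z n - w) = z n * g n (z n) - w * g n (z n)),
    Finset.sum_sub_distrib, ← Finset.mul_sum]
  ring

lemma mnlRevenue_le_iff (z : ι → ℝ) (w : ℝ) :
    mnlRevenue g z ≤ w ↔ ∑ n, g n (z n) * (z n - w) ≤ w := by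
  rw [← sub_nonpos, ← mul_le_mul_iff_left₀ (one_add_sum_pos hpos z), zero_mul,
    mnlRevenue_sub_mul hpos, sub_nonpos]

lemma le_mnlRevenue_iff (z : ι → ℝ) (w : ℝ) :
    w ≤ mnlRevenue g z ↔ w ≤ ∑ n, g n (z n) * (z n - w) := by
  rw [← sub_nonneg, ← mul_nonneg_iff_of_pos_right (one_add_sum_pos hpos z), mnlRevenue_sub_mul hpos,
    sub_nonneg]

lemma sum_mul_sub_mnlRevenue (z : ι → ℝ) :
    ∑ n, g n (z n) * (z n - mnlRevenue g z) = mnlRevenue g z :=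
  le_antisymm ((mnlRevenue_le_iff hpos z _).1 le_rfl) ((le_mnlRevenue_iff hpos z _).1 le_rfl)

lemma IsLocalMax.mnlRevenue_coord [DecidableEq ι] {z : ι → ℝ} (hz : IsLocalMax (mnlRevenue g) z)
    (n : ι) : IsLocalMax (fun t => g n t * (t - mnlRevenue g z)) (z n) := by
  have hz' : IsLocalMax (mnlRevenue g) (Function.update z n (z n)) := by
    rwa [Function.update_eq_self]
  filter_upwards [hz'.comp_continuous (Continuous.update continuous_const n continuous_id
    : Continuous fun t => Function.update z n t).continuousAt] with t ht
  simp only [Function.comp_apply, Function.update_eq_self] at ht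
  rw [mnlRevenue_le_iff hpos] at ht
  have hupdate := sum_apply_update_sub_sum (fun l v => g l v * (v - mnlRevenue g z)) z n t
  linarith [sum_mul_sub_mnlRevenue hpos z]

end MNL

section MNLMax

variable {ι : Type*} [Fintype ι] {g : ι → ℝ → ℝ} (hpos : ∀ n t, 0 < g n t)
  (hcont : ∀ n, Continuous (g n)) {b : ι → ℝ} (hb : ∀ n, 0 < b n)
  (hdecay : ∀ n s t, s ≤ t → g n t ≤ exp (-b n * (t - s)) * g n s)

include hpos hcont in
lemma continuous_mnlRevenue : Continuous (mnlRevenue g) :=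
  Continuous.div (continuous_finsetSum _ fun n _ => (continuous_apply n).mul
      ((hcont n).comp (continuous_apply n)))
    (continuous_const.add (continuous_finsetSum _ fun n _ => (hcont n).comp (continuous_apply n)))
    fun z => (one_add_sum_pos hpos z).ne'

include hpos hb hdecay

lemma mnlRevenue_le_sum_div (z : ι → ℝ) : mnlRevenue g z ≤ ∑ n, g n 0 / b n := by
  have hM : 0 ≤ ∑ n, g n 0 / b n :=
    Finset.sum_nonneg fun n _ => (div_pos (hpos n 0) (hb n)).le
  have hnum : ∑ n, z n * g n (z n) ≤ ∑ n, g n 0 / b n :=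
    Finset.sum_le_sum fun n _ => mul_le_div_of_decay (hpos n) (hb n) (hdecay n) (z n)
  have hden : 0 ≤ ∑ n, g n (z n) := Finset.sum_nonneg fun n _ => (hpos n (z n)).le
  rw [mnlRevenue, div_le_iff₀ (one_add_sum_pos hpos z)]
  nlinarith

include hcont in
lemma exists_forall_mnlRevenue_le : ∃ zs, ∀ z, mnlRevenue g z ≤ mnlRevenue g zs := by
  set M := ∑ n, g n 0 / b n
  set T := M + ∑ n, (b n)⁻¹
  have hM : 0 ≤ M := Finset.sum_nonneg fun n _ => (div_pos (hpos n 0) (hb n)).le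
  have hinv : ∀ n, (b n)⁻¹ ≤ ∑ n, (b n)⁻¹ := fun n =>
    Finset.single_le_sum (fun n _ => (inv_pos.2 (hb n)).le) (Finset.mem_univ n)
  have hT : 0 ≤ T := add_nonneg hM (Finset.sum_nonneg fun n _ => (inv_pos.2 (hb n)).le)
  obtain ⟨zs, -, hmax⟩ := (isCompact_Icc (a := (0 : ι → ℝ)) (b := fun _ => T)).exists_isMaxOn
    ⟨0, le_rfl, fun _ => hT⟩ (continuous_mnlRevenue hpos hcont).continuousOn
  refine ⟨zs, fun z => ?_⟩
  rcases lt_or_ge (mnlRevenue g z) 0 with hneg | hnn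
  · exact hneg.le.trans (by simpa [mnlRevenue] using hmax ⟨le_rfl, fun _ => hT⟩)
  set w := mnlRevenue g z
  have hTw n : 1 ≤ b n * (T - w) :=
    calc 1 = b n * (b n)⁻¹ := (mul_inv_cancel₀ (hb n).ne').symm
      _ ≤ b n * (T - w) := mul_le_mul_of_nonneg_left
        (by linarith [hinv n, mnlRevenue_le_sum_div hpos hb hdecay z]) (hb n).le
  have hle : w ≤ mnlRevenue g fun n => max 0 (min (z n) T) := by
    rw [le_mnlRevenue_iff hpos]
    calc w = ∑ n, g n (z n) * (z n - w) := (sum_mul_sub_mnlRevenue hpos z).symm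
      _ ≤ _ := Finset.sum_le_sum fun n _ =>
        mul_sub_le_mul_sub_max_min (hpos n) (hb n) (hdecay n) hnn (hTw n) (z n)
  exact hle.trans (hmax ⟨fun n => le_max_left _ _, fun n => max_le hT (min_le_right _ _)⟩)

include hcont in
theorem existsUnique_isLocalMax_mnlRevenue
    (huniq : ∀ n w t₀ t₁, IsLocalMax (fun t => g n t * (t - w)) t₀ →
      IsLocalMax (fun t => g n t * (t - w)) t₁ → t₀ = t₁) :
    ∃ zs, IsLocalMax (mnlRevenue g) zs ∧ (∀ z, IsLocalMax (mnlRevenue g) z → z = zs) ∧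
      ∀ z, z ≠ zs → mnlRevenue g z < mnlRevenue g zs := by
  classical
  -- `z n` is the unique local, hence the global, maximizer of `t ↦ g n t * (t - W z)`
  have hglobal : ∀ z, IsLocalMax (mnlRevenue g) z → ∀ z', mnlRevenue g z' ≤ mnlRevenue g z := by
    intro z hz z'
    rw [mnlRevenue_le_iff hpos]
    refine (Finset.sum_le_sum fun n _ => ?_).trans (sum_mul_sub_mnlRevenue hpos z).le
    obtain ⟨t₀, ht₀⟩ := exists_forall_mul_sub_le (hpos n) (hb n) (hdecay n) (hcont n)
      (mnlRevenue g z)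
    rw [← huniq n _ _ _ (Eventually.of_forall ht₀) (hz.mnlRevenue_coord hpos n)]
    exact ht₀ _
  obtain ⟨zs, hzs⟩ := exists_forall_mnlRevenue_le hpos hcont hb hdecay
  have hzs_loc : IsLocalMax (mnlRevenue g) zs := Eventually.of_forall hzs
  have hunique : ∀ z, IsLocalMax (mnlRevenue g) z → z = zs := by
    intro z hz
    have heq : mnlRevenue g z = mnlRevenue g zs := le_antisymm (hzs z) (hglobal z hz zs)
    funext n
    exact huniq n _ _ _ (hz.mnlRevenue_coord hpos n) (heq ▸ hzs_loc.mnlRevenue_coord hpos n)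
  refine ⟨zs, hzs_loc, hunique, fun z hne => (hzs z).lt_of_ne fun heq => hne ?_⟩
  exact hunique z (Eventually.of_forall fun y => heq ▸ hzs y)

end MNLMax

section GEVBlock

variable {ι : Type*}

noncomputable def blockUtility (G : (ι → ℝ) → ℝ) (c : ι → ℝ) (z : ℝ)
    (ab : (ι → ℝ) × (ι → ℝ)) : ℝ :=
  G fun i => exp (ab.1 i - ab.2 i * (z + c i))

noncomputable def blockMinUtility (G : (ι → ℝ) → ℝ) (c : ι → ℝ) (A : Set ((ι → ℝ) × (ι → ℝ)))
    (z : ℝ) : ℝ :=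
  sInf (blockUtility G c z '' A)

variable [Fintype ι] {G : (ι → ℝ) → ℝ} {c : ι → ℝ} {A : Set ((ι → ℝ) × (ι → ℝ))}
  (hG : ContDiffOn ℝ 2 G (posOrthant ι))

include hG in
lemma continuous_blockUtility (z : ℝ) : Continuous (blockUtility G c z) :=
  hG.continuousOn.comp_continuous (by fun_prop) fun _ _ => exp_pos _

variable [DecidableEq ι] [Nonempty ι]
  (hhom : ∀ s : ℝ, 0 < s → ∀ Y : ι → ℝ, (∀ i, 0 < Y i) → G (s • Y) = s * G Y)
  (hd1 : ∀ Y : ι → ℝ, (∀ i, 0 < Y i) → ∀ i, 0 < fderiv ℝ G Y (Pi.single i 1))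
  (hd2 : ∀ Y : ι → ℝ, (∀ i, 0 < Y i) → ∀ i j, i ≠ j →
    fderiv ℝ (fun W => fderiv ℝ G W (Pi.single i 1)) Y (Pi.single j 1) ≤ 0)
  (hAcomp : IsCompact A) (hAne : A.Nonempty) (hAconv : Convex ℝ A)
  (hAb : ∀ ab ∈ A, ∃ β : ℝ, 0 < β ∧ ∀ i, ab.2 i = β)

include hG hhom hd1

lemma blockUtility_pos (z : ℝ) (ab : (ι → ℝ) × (ι → ℝ)) : 0 < blockUtility G c z ab :=
  pos_of_homogeneous hG hhom hd1 fun _ => exp_pos _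

lemma continuous_log_blockUtility : Continuous fun ab => log (blockUtility G c 0 ab) :=
  (continuous_blockUtility hG 0).log fun ab => (blockUtility_pos hG hhom hd1 0 ab).ne'

lemma blockUtility_eq_exp {ab : (ι → ℝ) × (ι → ℝ)} {β : ℝ} (hβ : ∀ i, ab.2 i = β) (z : ℝ) :
    blockUtility G c z ab = exp (log (blockUtility G c 0 ab) - β * z) := by
  have hscale : (fun i => exp (ab.1 i - ab.2 i * (z + c i))) =
      exp (-β * z) • fun i => exp (ab.1 i - ab.2 i * (0 + c i)) := by
    funext i
    simp only [Pi.smul_apply, smul_eq_mul, ← exp_add, hβ i]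
    ring_nf
  rw [blockUtility, hscale, hhom _ (exp_pos _) _ fun _ => exp_pos _, exp_sub,
    exp_log (blockUtility_pos hG hhom hd1 0 ab)]
  simp only [blockUtility, neg_mul, exp_neg]
  ring

include hAb in
lemma blockUtility_eq_exp_of_mem {ab : (ι → ℝ) × (ι → ℝ)} (hab : ab ∈ A) (z : ℝ) :
    blockUtility G c z ab =
      exp (log (blockUtility G c 0 ab) - ab.2 (Classical.arbitrary ι) * z) := by
  obtain ⟨β, -, hβ⟩ := hAb ab hab
  rw [hβ]
  exact blockUtility_eq_exp hG hhom hd1 hβ z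

omit [Nonempty ι] in
include hd2 in
lemma convexOn_blockUtility (z : ℝ) : ConvexOn ℝ univ (blockUtility G c z) := by
  let L : ((ι → ℝ) × (ι → ℝ)) →ₗ[ℝ] ι → ℝ :=
    { toFun := fun ab i => ab.1 i - ab.2 i * (z + c i)
      map_add' := fun _ _ => by ext; simp; ring
      map_smul' := fun _ _ => by ext; simp; ring }
  exact (convexOn_comp_exp hG hhom (fun Y hY i => (hd1 Y hY i).le) hd2).comp_linearMap L

include hAcomp hAne hAb

lemma blockMinUtility_eq_exp :
    blockMinUtility G c A = fun z => exp (lowerEnvelope A (fun ab => log (blockUtility G c 0 ab))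
      (fun ab => ab.2 (Classical.arbitrary ι)) z) := by
  funext z
  obtain ⟨x, hx⟩ := activeSet_nonempty hAcomp (continuous_log_blockUtility hG hhom hd1)
    (β := fun ab => ab.2 (Classical.arbitrary ι)) (by fun_prop) hAne z
  exact (isLeast_image_of_mem_activeSet
    (fun ab hab => blockUtility_eq_exp_of_mem hG hhom hd1 hAb hab z) hx).csInf_eq

lemma blockMinUtility_pos (z : ℝ) : 0 < blockMinUtility G c A z := by
  rw [blockMinUtility_eq_exp hG hhom hd1 hAcomp hAne hAb]
  exact exp_pos _

lemma continuous_blockMinUtility : Continuous (blockMinUtility G c A) := by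
  rw [blockMinUtility_eq_exp hG hhom hd1 hAcomp hAne hAb]
  exact (continuous_lowerEnvelope hAcomp hAne (continuous_log_blockUtility hG hhom hd1)
    (by fun_prop)).rexp

lemma exists_blockMinUtility_le_exp_mul : ∃ b > 0, ∀ s t, s ≤ t →
    blockMinUtility G c A t ≤ exp (-b * (t - s)) * blockMinUtility G c A s := by
  have hβ : Continuous fun ab : (ι → ℝ) × (ι → ℝ) => ab.2 (Classical.arbitrary ι) := by fun_prop
  obtain ⟨x, hx, hmin⟩ := hAcomp.exists_isMinOn hAne hβ.continuousOn
  obtain ⟨b, hb, hconst⟩ := hAb x hx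
  refine ⟨b, hb, fun s t hst => ?_⟩
  rw [blockMinUtility_eq_exp hG hhom hd1 hAcomp hAne hAb, ← exp_add, exp_le_exp]
  have := lowerEnvelope_le_sub_mul hAcomp hAne (continuous_log_blockUtility (c := c) hG hhom hd1)
    hβ (fun y hy => (hconst _).symm.trans_le (hmin hy)) hst
  linarith

include hd2 hAconv in
lemma ordConnected_image_activeSet (z : ℝ) :
    ((fun ab => ab.2 (Classical.arbitrary ι)) '' activeSet A (fun ab => log (blockUtility G c 0 ab))
      (fun ab => ab.2 (Classical.arbitrary ι)) z).OrdConnected := by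
  obtain ⟨x, hx⟩ := activeSet_nonempty hAcomp (continuous_log_blockUtility hG hhom hd1)
    (β := fun ab => ab.2 (Classical.arbitrary ι)) (by fun_prop) hAne z
  rw [activeSet_eq_setOf_le (fun ab hab => blockUtility_eq_exp_of_mem hG hhom hd1 hAb hab z) hx]
  exact ((((convexOn_blockUtility hG hhom hd1 hd2 z).subset (subset_univ A) hAconv).convex_le _
    ).linear_image (LinearMap.proj (Classical.arbitrary ι) ∘ₗ LinearMap.snd ℝ _ _)).ordConnected

include hd2 hAconv

lemma exists_minimizer_of_isLocalMax {w t₀ : ℝ}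
    (hmax : IsLocalMax (fun t => blockMinUtility G c A t * (t - w)) t₀) :
    ∃ ab ∈ A, (∀ ab' ∈ A, blockUtility G c t₀ ab ≤ blockUtility G c t₀ ab') ∧
      ∃ β > 0, (∀ i, ab.2 i = β) ∧ β * (t₀ - w) = 1 := by
  rw [blockMinUtility_eq_exp hG hhom hd1 hAcomp hAne hAb] at hmax
  obtain ⟨x, hx, hβx⟩ := exists_mem_activeSet_mul_sub_eq_one hAcomp hAne
    (continuous_log_blockUtility hG hhom hd1) (by fun_prop)
    (ordConnected_image_activeSet hG hhom hd1 hd2 hAcomp hAne hAconv hAb t₀) hmax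
  have hf := fun ab hab => blockUtility_eq_exp_of_mem (c := c) hG hhom hd1 hAb (ab := ab) hab t₀
  obtain ⟨β, hβ, hconst⟩ := hAb x hx.1
  refine ⟨x, hx.1, fun ab hab => ?_, β, hβ, hconst, hconst _ ▸ hβx⟩
  rw [hf x hx.1, ← lowerEnvelope_eq_of_mem_activeSet hx]
  exact (isLeast_image_of_mem_activeSet hf hx).2 (mem_image_of_mem _ hab)

lemma eq_of_isLocalMax_blockMinUtility {w t₀ t₁ : ℝ}
    (h₀ : IsLocalMax (fun t => blockMinUtility G c A t * (t - w)) t₀)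
    (h₁ : IsLocalMax (fun t => blockMinUtility G c A t * (t - w)) t₁) : t₀ = t₁ := by
  rw [blockMinUtility_eq_exp hG hhom hd1 hAcomp hAne hAb] at h₀ h₁
  refine eq_of_isLocalMax_exp_lowerEnvelope hAcomp hAne (continuous_log_blockUtility hG hhom hd1)
    (by fun_prop) (fun x hx => ?_)
    (ordConnected_image_activeSet hG hhom hd1 hd2 hAcomp hAne hAconv hAb) h₀ h₁
  obtain ⟨β, hβ, hconst⟩ := hAb x hx
  exact hconst _ ▸ hβ

end GEVBlock

theorem stmt_9_general
    (m N : ℕ)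
    (part : Fin m → Fin N) (hpart : ∀ n : Fin N, ∃ i, part i = n)
    (Gn : ∀ n : Fin N, ({i : Fin m // part i = n} → ℝ) → ℝ)
    (hGsmooth : ∀ n, ContDiffOn ℝ 2 (Gn n)
      {Y : {i : Fin m // part i = n} → ℝ | ∀ i, 0 < Y i})
    (hGhom : ∀ n, ∀ lam : ℝ, 0 < lam → ∀ Y : {i : Fin m // part i = n} → ℝ,
      (∀ i, 0 < Y i) → Gn n (lam • Y) = lam * Gn n Y)
    (hGd1 : ∀ n, ∀ Y : {i : Fin m // part i = n} → ℝ, (∀ i, 0 < Y i) →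
      ∀ i, 0 < fderiv ℝ (Gn n) Y (Pi.single i 1))
    (hGd2 : ∀ n, ∀ Y : {i : Fin m // part i = n} → ℝ, (∀ i, 0 < Y i) →
      ∀ i j, i ≠ j →
        fderiv ℝ (fun W => fderiv ℝ (Gn n) W (Pi.single i 1)) Y (Pi.single j 1) ≤ 0)
    (An : ∀ n : Fin N,
      Set (({i : Fin m // part i = n} → ℝ) × ({i : Fin m // part i = n} → ℝ)))
    (hAne : ∀ n, (An n).Nonempty) (hAconv : ∀ n, Convex ℝ (An n))
    (hAcomp : ∀ n, IsCompact (An n))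
    (hAb : ∀ n, ∀ ab ∈ An n, ∃ β : ℝ, 0 < β ∧ ∀ i, ab.2 i = β)
    (c : Fin m → ℝ) :
    ∃ zs : Fin N → ℝ,
      IsLocalMax (WP m N part Gn c An) zs ∧
      (∀ z : Fin N → ℝ, IsLocalMax (WP m N part Gn c An) z → z = zs) ∧
      (∀ z : Fin N → ℝ, z ≠ zs →
        WP m N part Gn c An z < WP m N part Gn c An zs) ∧
      ∃ (abs : ∀ n : Fin N,
          ({i : Fin m // part i = n} → ℝ) × ({i : Fin m // part i = n} → ℝ))
        (β : Fin N → ℝ),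
        (∀ n, abs n ∈ An n) ∧
        (∀ n, ∀ ab ∈ An n,
          GzP m N part Gn c n (zs n) (abs n) ≤ GzP m N part Gn c n (zs n) ab) ∧
        (∀ n, 0 < β n) ∧
        (∀ n, ∀ i, (abs n).2 i = β n) ∧
        (∀ n, zs n = 1 / β n +
          ∑ l, ghatP m N part Gn c An l (zs l) / β l) := by
  have hnonempty : ∀ n, Nonempty {i : Fin m // part i = n} := fun n =>
    (hpart n).elim fun i hi => ⟨⟨i, hi⟩⟩
  have hpos n := blockMinUtility_pos (c := fun i => c i.1) (hGsmooth n) (hGhom n) (hGd1 n)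
    (hAcomp n) (hAne n) (hAb n)
  choose b hb hdecay using fun n => exists_blockMinUtility_le_exp_mul (c := fun i => c i.1)
    (hGsmooth n) (hGhom n) (hGd1 n) (hAcomp n) (hAne n) (hAb n)
  obtain ⟨zs, hloc, hunique, hlt⟩ := existsUnique_isLocalMax_mnlRevenue hpos
    (fun n => continuous_blockMinUtility (hGsmooth n) (hGhom n) (hGd1 n) (hAcomp n) (hAne n)
      (hAb n))
    hb hdecay fun n _ _ _ => eq_of_isLocalMax_blockMinUtility (hGsmooth n) (hGhom n) (hGd1 n)
      (hGd2 n) (hAcomp n) (hAne n) (hAconv n) (hAb n)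
  choose ab hab hmin β hβ hconst hβz using fun n => exists_minimizer_of_isLocalMax (hGsmooth n)
    (hGhom n) (hGd1 n) (hGd2 n) (hAcomp n) (hAne n) (hAconv n) (hAb n)
    (hloc.mnlRevenue_coord hpos n)
  refine ⟨zs, hloc, hunique, hlt, ab, β, hab, hmin, hβ, hconst, fun n => ?_⟩
  have hgap l : zs l - WP m N part Gn c An zs = 1 / β l := by
    rw [eq_div_iff (hβ l).ne', mul_comm]
    exact hβz l
  have hW : ∑ l, ghatP m N part Gn c An l (zs l) * (zs l - WP m N part Gn c An zs) =
      WP m N part Gn c An zs := sum_mul_sub_mnlRevenue hpos zs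
  simp only [hgap, mul_one_div] at hW
  linarith [hgap n]

/-- `W` has exactly one local maximizer `z*`, which is also its
unique global maximizer, and `z*` satisfies the fixed-point system
`z*_n = 1/β*_n + Σ_l ĝ_l(z*_l)/β*_l`, where `β*_n` is the common price-sensitivity
value of a minimizer `(a^{n*}, b^{n*}) ∈ A^n` of `G^n(Y^n|z*_n, ·, ·)`. -/
theorem stmt_9
    (m N : ℕ) (hN : 1 ≤ N)
    (part : Fin m → Fin N) (hpart : ∀ n : Fin N, ∃ i, part i = n)
    (Gn : ∀ n : Fin N, ({i : Fin m // part i = n} → ℝ) → ℝ)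
    (hGnonneg : ∀ n, ∀ Y : {i : Fin m // part i = n} → ℝ,
      (∀ i, 0 < Y i) → 0 ≤ Gn n Y)
    (hGsmooth : ∀ n, ContDiffOn ℝ 2 (Gn n)
      {Y : {i : Fin m // part i = n} → ℝ | ∀ i, 0 < Y i})
    (hGhom : ∀ n, ∀ lam : ℝ, 0 < lam → ∀ Y : {i : Fin m // part i = n} → ℝ,
      (∀ i, 0 < Y i) → Gn n (lam • Y) = lam * Gn n Y)
    (hGd1 : ∀ n, ∀ Y : {i : Fin m // part i = n} → ℝ, (∀ i, 0 < Y i) →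
      ∀ i, 0 < fderiv ℝ (Gn n) Y (Pi.single i 1))
    (hGd2 : ∀ n, ∀ Y : {i : Fin m // part i = n} → ℝ, (∀ i, 0 < Y i) →
      ∀ i j, i ≠ j →
        fderiv ℝ (fun W => fderiv ℝ (Gn n) W (Pi.single i 1)) Y (Pi.single j 1) ≤ 0)
    (An : ∀ n : Fin N,
      Set (({i : Fin m // part i = n} → ℝ) × ({i : Fin m // part i = n} → ℝ)))
    (hAne : ∀ n, (An n).Nonempty) (hAconv : ∀ n, Convex ℝ (An n))
    (hAcomp : ∀ n, IsCompact (An n))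
    (hAb : ∀ n, ∀ ab ∈ An n, ∃ β : ℝ, 0 < β ∧ ∀ i, ab.2 i = β)
    (c : Fin m → ℝ) (hc : ∀ i, 0 ≤ c i) :
    ∃ zs : Fin N → ℝ,
      IsLocalMax (WP m N part Gn c An) zs ∧
      (∀ z : Fin N → ℝ, IsLocalMax (WP m N part Gn c An) z → z = zs) ∧
      (∀ z : Fin N → ℝ, z ≠ zs →
        WP m N part Gn c An z < WP m N part Gn c An zs) ∧
      ∃ (abs : ∀ n : Fin N,
          ({i : Fin m // part i = n} → ℝ) × ({i : Fin m // part i = n} → ℝ))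
        (β : Fin N → ℝ),
        (∀ n, abs n ∈ An n) ∧
        (∀ n, ∀ ab ∈ An n,
          GzP m N part Gn c n (zs n) (abs n) ≤ GzP m N part Gn c n (zs n) ab) ∧
        (∀ n, 0 < β n) ∧
        (∀ n, ∀ i, (abs n).2 i = β n) ∧
        (∀ n, zs n = 1 / β n +
          ∑ l, ghatP m N part Gn c An l (zs l) / β l) :=
  stmt_9_general m N part hpart Gn hGsmooth hGhom hGd1 hGd2 An hAne hAconv hAcomp hAb c
end
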